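/- arXiv:1707.03129 — 5 statements merged into one kernel-verified Lean document; each statement's English description precedes it below -/
import Mathlib

section
/- Let (M,d) be a complete metric space and v ∈ AC^p(a,b;M) for 1 ≤ p ≤ ∞. Then for almost every t ∈ (a,b) the metric derivative |v'|(t) := lim_{s→t} d(v(s),v(t))/|s−t| exists, the function |v'| belongs to L^p(a,b) and satisfies d(v(s),v(t)) ≤ ∫ₛᵗ |v'|(r) dr for all a < s ≤ t < b, and for any other m ∈ L^p(a,b) satisfying this inequality one has |v'|(t) ≤ m(t) for a.e. t ∈ (a,b). -/
open MeasureTheory Set Filter Topology Metric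
open scoped ENNReal

noncomputable section

/-- The positive part of an extended real number, as an element of `ℝ≥0∞`. -/
def ErealPos (x : EReal) : ℝ≥0∞ := if x = ⊤ then ⊤ else ENNReal.ofReal x.toReal

/-- `md` is (a.e. on `S`) the metric derivative of the curve `v`. -/
def IsMetricDerivOn {X : Type*} [PseudoMetricSpace X] (v : ℝ → X) (S : Set ℝ)
    (md : ℝ → ℝ) : Prop :=
  ∀ᵐ t ∂(volume.restrict S),
    Tendsto (fun s => dist (v s) (v t) / |s - t|) (nhdsWithin t (S \ {t})) (nhds (md t))

/-- `g` is a strong upper gradient of `E` : along every absolutely continuous curve `w`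
with metric derivative `mw`, `g ∘ w` is measurable and
`|E (w t) - E (w s)| ≤ ∫ₛᵗ g(w r) mw r dr`. -/
def StrongUpperGradient {X : Type*} [PseudoMetricSpace X] (E : X → EReal)
    (g : X → ℝ≥0∞) : Prop :=
  ∀ (a b : ℝ) (w : ℝ → X) (mw : ℝ → ℝ),
    IntegrableOn mw (Ioo a b) →
    (∀ x ∈ Ioo a b, 0 ≤ mw x) →
    IsMetricDerivOn w (Ioo a b) mw →
    (∀ s t : ℝ, a < s → s ≤ t → t < b → dist (w s) (w t) ≤ ∫ r in s..t, mw r) →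
    Measurable (fun t => g (w t)) ∧
      ∀ s t : ℝ, a < s → s ≤ t → t < b →
        max (E (w t) - E (w s)) (E (w s) - E (w t)) ≤
          ((∫⁻ r in Ioc s t, g (w r) * ENNReal.ofReal (mw r)) : EReal)

/-- The time interval `(0, T)` for `T ∈ (0, +∞]`. -/
def ITo (T : EReal) : Set ℝ := {x : ℝ | 0 < x ∧ (x : EReal) < T}

/-- `v` is a `p`-gradient flow (`p`-curve of maximal slope) of `E` with respect to the
strong upper gradient `g` on `(0,T)`, with metric derivative `md`:  `v` is locally
absolutely continuous on `(0,T)`, `E ∘ v` is finite and non-increasing there, and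
`d/dt E(v t) ≤ -(1/p') g^{p'}(v t) - (1/p) |v'|^p(t)` for a.e. `t ∈ (0,T)`. -/
def IsPGradientFlow {X : Type*} [PseudoMetricSpace X] (E : X → EReal) (g : X → ℝ≥0∞)
    (p : ℝ) (T : EReal) (v : ℝ → X) (md : ℝ → ℝ) : Prop :=
  (∀ x ∈ ITo T, 0 ≤ md x) ∧
  (∀ c d : ℝ, 0 < c → c ≤ d → (d : EReal) < T → IntegrableOn md (Ioc c d)) ∧
  (∀ s t : ℝ, 0 < s → s ≤ t → (t : EReal) < T → dist (v s) (v t) ≤ ∫ r in s..t, md r) ∧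
  IsMetricDerivOn v (ITo T) md ∧
  (∀ t ∈ ITo T, E (v t) ≠ ⊤ ∧ E (v t) ≠ ⊥) ∧
  AntitoneOn (fun t => (E (v t)).toReal) (ITo T) ∧
  ∀ᵐ t ∂(volume.restrict (ITo T)), ∃ D : ℝ,
    HasDerivAt (fun s => (E (v s)).toReal) D t ∧ D ≤ 0 ∧
    g (v t) ^ (p / (p - 1)) / ENNReal.ofReal (p / (p - 1)) +
        ENNReal.ofReal (md t ^ p / p) ≤ ENNReal.ofReal (-D)

/-- `f` is absolutely continuous on the interval `[c,d]`. -/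
def AbsCont (f : ℝ → ℝ) (c d : ℝ) : Prop :=
  ∀ ε > (0:ℝ), ∃ δ > (0:ℝ), ∀ n : ℕ, ∀ x y : Fin n → ℝ,
    (∀ i, c ≤ x i ∧ x i ≤ y i ∧ y i ≤ d) →
    (Pairwise fun i j => Disjoint (Ioo (x i) (y i)) (Ioo (x j) (y j))) →
    (∑ i, (y i - x i)) < δ → (∑ i, |f (y i) - f (x i)|) < ε

/-- `X` is a length space: every two points are joined by a constant speed geodesic. -/
def IsLengthSpace (X : Type*) [PseudoMetricSpace X] : Prop :=
  ∀ u w : X, ∃ γ : ℝ → X, γ 0 = u ∧ γ 1 = w ∧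
    ∀ s t : ℝ, 0 ≤ s → s ≤ t → t ≤ 1 → dist (γ s) (γ t) = (t - s) * dist u w

/-- `E` is `lam`-geodesically convex. -/
def GeodesicConvexWith {X : Type*} [PseudoMetricSpace X] (E : X → EReal) (lam : ℝ) : Prop :=
  ∀ u w : X, E u ≠ ⊤ → E w ≠ ⊤ → ∃ γ : ℝ → X, γ 0 = u ∧ γ 1 = w ∧
    (∀ s t : ℝ, 0 ≤ s → s ≤ t → t ≤ 1 → dist (γ s) (γ t) = (t - s) * dist u w) ∧
    ∀ t : ℝ, 0 ≤ t → t ≤ 1 →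
      E (γ t) ≤ ((1 - t : ℝ) : EReal) * E u + ((t : ℝ) : EReal) * E w -
        ((lam / 2 * (t * (1 - t)) * dist u w ^ 2 : ℝ) : EReal)

/-- The descending slope `|D⁻E|(u) = limsup_{w → u} (E u - E w)⁺ / d(u,w)`. -/
def descSlope {X : Type*} [PseudoMetricSpace X] (E : X → EReal) (u : X) : ℝ≥0∞ :=
  Filter.limsup (fun w => ErealPos (E u - E w) / ENNReal.ofReal (dist u w))
    (nhdsWithin u {u}ᶜ)

/-! The metric derivative is `|v'|(t) = sup_{y ∈ C} |d/dt d(v t, y)|`, where `C` is a countable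
dense subset of the image of `v`. Each `φ_y = d(v ·, y)` satisfies `|φ_y s - φ_y t| ≤ ∫ₛᵗ m`, so
it is absolutely continuous with `|φ_y'| ≤ m` a.e.; hence `|v'| ≤ m` a.e. for every admissible `m`.
Conversely `d(v s, v t) = sup_y |φ_y t - φ_y s| ≤ ∫ₛᵗ |v'|` by the fundamental theorem of calculus
for absolutely continuous functions. Finally, at a Lebesgue point `t` of `|v'|` the difference
quotients `d(v s, v t)/|s - t|` are squeezed between those of the `φ_y` and those of `∫ |v'|`. -/

theorem AbsolutelyContinuousOnInterval.of_dist_le_dist {X Y : Type*} [PseudoMetricSpace X]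
    [PseudoMetricSpace Y] {f : ℝ → X} {G : ℝ → Y} {c d : ℝ}
    (hG : AbsolutelyContinuousOnInterval G c d)
    (h : ∀ x ∈ uIcc c d, ∀ y ∈ uIcc c d, dist (f x) (f y) ≤ dist (G x) (G y)) :
    AbsolutelyContinuousOnInterval f c d := by
  refine squeeze_zero' (.of_forall fun E => Finset.sum_nonneg fun _ _ => dist_nonneg) ?_ hG
  filter_upwards [mem_inf_of_right (mem_principal_self _)] with E hE
  exact Finset.sum_le_sum fun i hi => h _ (hE.1 i hi).1 _ (hE.1 i hi).2

theorem abs_le_of_hasDerivAt_of_abs_sub_le {f G : ℝ → ℝ} {f' G' t : ℝ}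
    (hf : HasDerivAt f f' t) (hG : HasDerivAt G G' t)
    (h : ∀ᶠ y in 𝓝[>] t, |f y - f t| ≤ G y - G t) : |f'| ≤ G' := by
  have hright : 𝓝[>] t ≤ 𝓝[≠] t := nhdsWithin_mono t fun y hy => ne_of_gt hy
  refine le_of_tendsto_of_tendsto ((hf.tendsto_slope.mono_left hright).abs)
    (hG.tendsto_slope.mono_left hright) ?_
  filter_upwards [h, self_mem_nhdsWithin] with y hy (hty : t < y)
  rw [slope_def_field, slope_def_field, abs_div, abs_of_pos (sub_pos.2 hty)]
  exact div_le_div_of_nonneg_right hy (sub_pos.2 hty).le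

theorem ae_restrict_of_forall_Ioo {S : Set ℝ} (hS : IsOpen S) {P : ℝ → Prop}
    (h : ∀ x ∈ S, ∀ y ∈ S, x < y → ∀ᵐ t, t ∈ Ioo x y → P t) :
    ∀ᵐ t ∂volume.restrict S, P t := by
  have hQ : ∀ᵐ t, ∀ q : ℚ × ℚ, (q.1 : ℝ) ∈ S → (q.2 : ℝ) ∈ S → t ∈ Ioo (q.1 : ℝ) q.2 → P t := by
    refine ae_all_iff.2 fun q => ?_
    by_cases hq : (q.1 : ℝ) ∈ S ∧ (q.2 : ℝ) ∈ S ∧ (q.1 : ℝ) < q.2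
    · filter_upwards [h _ hq.1 _ hq.2.1 hq.2.2] with t ht _ _ using ht
    · exact .of_forall fun t h1 h2 ht => absurd ⟨h1, h2, ht.1.trans ht.2⟩ hq
  rw [ae_restrict_iff' hS.measurableSet]
  filter_upwards [hQ] with t ht htS
  obtain ⟨ε, hε, hball⟩ := Metric.isOpen_iff.1 hS t htS
  rw [Real.ball_eq_Ioo] at hball
  obtain ⟨q₁, hq₁⟩ := exists_rat_btwn (sub_lt_self t hε)
  obtain ⟨q₂, hq₂⟩ := exists_rat_btwn (lt_add_of_pos_right t hε)
  exact ht (q₁, q₂) (hball ⟨hq₁.1, by linarith⟩) (hball ⟨by linarith, hq₂.2⟩) ⟨hq₁.2, hq₂.1⟩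

namespace MeasureTheory.LocallyIntegrableOn

theorem of_ae_restrict_norm_le {α E F : Type*} [MeasurableSpace α] [TopologicalSpace α]
    [NormedAddCommGroup E] [NormedAddCommGroup F] {μ : Measure α} {f : α → E} {g : α → F}
    {S : Set α} (hf : LocallyIntegrableOn f S μ) (hg : AEStronglyMeasurable g (μ.restrict S))
    (h : ∀ᵐ t ∂μ.restrict S, ‖g t‖ ≤ ‖f t‖) : LocallyIntegrableOn g S μ := by
  intro x hx
  obtain ⟨U, hU, hfU⟩ := hf x hx
  exact ⟨U ∩ S, inter_mem hU self_mem_nhdsWithin, Integrable.mono (hfU.mono_set inter_subset_left)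
    (hg.mono_set inter_subset_right) (ae_restrict_of_ae_restrict_of_subset inter_subset_right h)⟩

variable {g : ℝ → ℝ} {S : Set ℝ}

theorem intervalIntegrable (hg : LocallyIntegrableOn g S) (hSc : S.OrdConnected) {x y : ℝ}
    (hx : x ∈ S) (hy : y ∈ S) : IntervalIntegrable g volume x y :=
  (hg.integrableOn_compact_subset (hSc.uIcc_subset hx hy) isCompact_uIcc).intervalIntegrable

theorem ae_hasDerivAt_integral (hg : LocallyIntegrableOn g S) (hS : IsOpen S)
    (hSc : S.OrdConnected) :
    ∀ᵐ t ∂volume.restrict S, HasDerivAt (fun s => ∫ r in t..s, g r) (g t) t := by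
  refine ae_restrict_of_forall_Ioo hS fun x hx y hy _ => ?_
  filter_upwards [(hg.intervalIntegrable hSc hx hy).ae_hasDerivAt_integral] with t ht hxy
  have htI : t ∈ uIcc x y := Icc_subset_uIcc (Ioo_subset_Icc_self hxy)
  exact ht htI t htI

end MeasureTheory.LocallyIntegrableOn

theorem dist_le_of_forall_abs_dist_sub_dist_le {X : Type*} [PseudoMetricSpace X] {C : Set X}
    {x y : X} {B : ℝ} (hy : y ∈ closure C) (h : ∀ z ∈ C, |dist x z - dist y z| ≤ B) :
    dist x y ≤ B := by
  have hclosed : IsClosed {z | |dist x z - dist y z| ≤ B} :=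
    isClosed_le (by fun_prop) continuous_const
  simpa using hclosed.closure_subset_iff.2 h hy

section DifferenceQuotient

variable {X : Type*} [PseudoMetricSpace X] {v : ℝ → X}

theorem eventually_lt_dist_div_of_hasDerivAt {f : ℝ → ℝ} {f' l t : ℝ} (hf : HasDerivAt f f' t)
    (hfv : ∀ s, |f s - f t| ≤ dist (v s) (v t)) (hl : l < |f'|) :
    ∀ᶠ s in 𝓝[≠] t, l < dist (v s) (v t) / |s - t| := by
  filter_upwards [hf.tendsto_slope.abs.eventually (lt_mem_nhds hl)] with s hs
  rw [slope_def_field, abs_div] at hs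
  exact hs.trans_le (div_le_div_of_nonneg_right (hfv s) (abs_nonneg _))

theorem tendsto_dist_div_of_hasDerivAt {P : ℝ → ℝ} {t L : ℝ} (hP : HasDerivAt P L t)
    (hup : ∀ᶠ s in 𝓝[≠] t, dist (v s) (v t) / |s - t| ≤ slope P t s)
    (hlow : ∀ l < L, ∀ᶠ s in 𝓝[≠] t, l < dist (v s) (v t) / |s - t|) :
    Tendsto (fun s => dist (v s) (v t) / |s - t|) (𝓝[≠] t) (𝓝 L) := by
  refine tendsto_order.2 ⟨hlow, fun u hu => ?_⟩
  filter_upwards [hup, hP.tendsto_slope.eventually (gt_mem_nhds hu)] with s h1 h2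
  exact h1.trans_lt h2

end DifferenceQuotient

def DistLeIntegralOn {X : Type*} [PseudoMetricSpace X] (v : ℝ → X) (S : Set ℝ) (m : ℝ → ℝ) :
    Prop :=
  ∀ s ∈ S, ∀ t ∈ S, s ≤ t → dist (v s) (v t) ≤ ∫ r in s..t, m r

def supDistDeriv {X : Type*} [PseudoMetricSpace X] (v : ℝ → X) (C : Set X) (t : ℝ) : ℝ :=
  ⨆ y : C, |deriv (fun s => dist (v s) (y : X)) t|

theorem measurable_supDistDeriv {X : Type*} [PseudoMetricSpace X] {v : ℝ → X} {C : Set X}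
    (hC : C.Countable) : Measurable (supDistDeriv v C) :=
  have := hC.to_subtype
  Measurable.iSup fun _ => (measurable_deriv _).abs

theorem supDistDeriv_nonneg {X : Type*} [PseudoMetricSpace X] {v : ℝ → X} {C : Set X} (t : ℝ) :
    0 ≤ supDistDeriv v C t :=
  Real.iSup_nonneg fun _ => abs_nonneg _

namespace DistLeIntegralOn

variable {X : Type*} [PseudoMetricSpace X] {v : ℝ → X} {C : Set X} {S T : Set ℝ} {g : ℝ → ℝ}

theorem mono (hv : DistLeIntegralOn v S g) (hT : T ⊆ S) : DistLeIntegralOn v T g :=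
  fun s hs t ht => hv s (hT hs) t (hT ht)

theorem dist_comp (hv : DistLeIntegralOn v S g) (y : X) :
    DistLeIntegralOn (fun t => dist (v t) y) S g := fun s hs t ht hst =>
  (abs_dist_sub_le _ _ _).trans (hv s hs t ht hst)

theorem dist_div_le (hv : DistLeIntegralOn v S g) {s t : ℝ} (hs : s ∈ S) (ht : t ∈ S)
    (hst : s ≠ t) : dist (v s) (v t) / |s - t| ≤ (∫ r in t..s, g r) / (s - t) := by
  rcases hst.lt_or_gt with hst | hts
  · rw [abs_of_neg (sub_neg.2 hst), intervalIntegral.integral_symm, neg_div, ← div_neg, neg_sub]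
    exact div_le_div_of_nonneg_right (hv s hs t ht hst.le) (sub_nonneg.2 hst.le)
  · rw [abs_of_pos (sub_pos.2 hts), dist_comm]
    exact div_le_div_of_nonneg_right (hv t ht s hs hts.le) (sub_nonneg.2 hts.le)

theorem absolutelyContinuousOnInterval {c d : ℝ} (hv : DistLeIntegralOn v (Icc c d) g)
    (hcd : c ≤ d) (hg : IntervalIntegrable g volume c d) :
    AbsolutelyContinuousOnInterval v c d := by
  refine (hg.absolutelyContinuousOnInterval_intervalIntegral left_mem_uIcc).of_dist_le_dist
    fun x hx y hy => ?_
  wlog hxy : x ≤ y generalizing x y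
  · rw [dist_comm, dist_comm (∫ r in c..x, g r)]
    exact this y hy x hx (le_of_not_ge hxy)
  rw [Real.dist_eq, abs_sub_comm, intervalIntegral.integral_interval_sub_left
    (hg.mono_set (uIcc_subset_uIcc_left hy)) (hg.mono_set (uIcc_subset_uIcc_left hx))]
  rw [uIcc_of_le hcd] at hx hy
  exact (hv x hx y hy hxy).trans (le_abs_self _)

theorem ae_abs_deriv_le_on_Ioo {f : ℝ → ℝ} {c d : ℝ} (hf : DistLeIntegralOn f (Icc c d) g)
    (hcd : c ≤ d) (hg : IntervalIntegrable g volume c d) :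
    ∀ᵐ t, t ∈ Ioo c d → DifferentiableAt ℝ f t ∧ |deriv f t| ≤ g t := by
  filter_upwards [(hf.absolutelyContinuousOnInterval hcd hg).ae_differentiableAt,
    hg.ae_hasDerivAt_integral] with t hfd hG ht
  have htI : t ∈ uIcc c d := by rw [uIcc_of_le hcd]; exact Ioo_subset_Icc_self ht
  refine ⟨hfd htI, abs_le_of_hasDerivAt_of_abs_sub_le (hfd htI).hasDerivAt (hG htI t htI) ?_⟩
  filter_upwards [Ioo_mem_nhdsGT ht.2] with y hy
  rw [intervalIntegral.integral_same, sub_zero, abs_sub_comm, ← Real.dist_eq]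
  exact hf t (Ioo_subset_Icc_self ht) y ⟨ht.1.le.trans hy.1.le, hy.2.le⟩ hy.1.le

theorem continuousOn (hv : DistLeIntegralOn v S g) (hS : IsOpen S) (hSc : S.OrdConnected)
    (hg : LocallyIntegrableOn g S) : ContinuousOn v S := by
  intro t ht
  obtain ⟨c, d, htcd, hnhds, hsub⟩ := exists_Icc_mem_subset_of_mem_nhds (hS.mem_nhds ht)
  have hcd : c ≤ d := htcd.1.trans htcd.2
  have hdist := (((hv.dist_comp (v t)).mono hsub).absolutelyContinuousOnInterval hcd
    (hg.intervalIntegrable hSc (hsub ⟨le_rfl, hcd⟩) (hsub ⟨hcd, le_rfl⟩))).continuousOn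
  rw [uIcc_of_le hcd] at hdist
  have hlim := (hdist.continuousAt hnhds).tendsto
  rw [dist_self] at hlim
  exact (tendsto_iff_dist_tendsto_zero.2 hlim).mono_left nhdsWithin_le_nhds

theorem ae_abs_deriv_le {f : ℝ → ℝ} (hf : DistLeIntegralOn f S g) (hS : IsOpen S)
    (hSc : S.OrdConnected) (hg : LocallyIntegrableOn g S) :
    ∀ᵐ t ∂volume.restrict S, DifferentiableAt ℝ f t ∧ |deriv f t| ≤ g t :=
  ae_restrict_of_forall_Ioo hS fun _ hc _ hd hcd =>
    (hf.mono (hSc.out hc hd)).ae_abs_deriv_le_on_Ioo hcd.le (hg.intervalIntegrable hSc hc hd)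

theorem ae_forall_abs_deriv_dist_le (hv : DistLeIntegralOn v S g) (hS : IsOpen S)
    (hSc : S.OrdConnected) (hg : LocallyIntegrableOn g S) (hC : C.Countable) :
    ∀ᵐ t ∂volume.restrict S, ∀ y ∈ C, DifferentiableAt ℝ (fun s => dist (v s) y) t ∧
      |deriv (fun s => dist (v s) y) t| ≤ g t :=
  (ae_ball_iff hC).2 fun y _ => (hv.dist_comp y).ae_abs_deriv_le hS hSc hg

theorem ae_supDistDeriv_le (hv : DistLeIntegralOn v S g) (hS : IsOpen S)
    (hSc : S.OrdConnected) (hg : LocallyIntegrableOn g S) (hC : C.Countable)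
    (hvC : v '' S ⊆ closure C) : ∀ᵐ t ∂volume.restrict S, supDistDeriv v C t ≤ g t := by
  filter_upwards [hv.ae_forall_abs_deriv_dist_le hS hSc hg hC,
    ae_restrict_mem hS.measurableSet] with t ht htS
  have : Nonempty C := (closure_nonempty_iff.1 ⟨_, hvC (mem_image_of_mem v htS)⟩).to_subtype
  exact ciSup_le fun y => (ht y y.2).2

theorem ae_abs_deriv_dist_le_supDistDeriv (hv : DistLeIntegralOn v S g) (hS : IsOpen S)
    (hSc : S.OrdConnected) (hg : LocallyIntegrableOn g S) (hC : C.Countable) :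
    ∀ᵐ t ∂volume.restrict S, ∀ y ∈ C, DifferentiableAt ℝ (fun s => dist (v s) y) t ∧
      |deriv (fun s => dist (v s) y) t| ≤ supDistDeriv v C t := by
  filter_upwards [hv.ae_forall_abs_deriv_dist_le hS hSc hg hC] with t ht y hy
  exact ⟨(ht y hy).1, le_ciSup (f := fun y : C => |deriv (fun s => dist (v s) (y : X)) t|)
    ⟨g t, forall_mem_range.2 fun y => (ht y y.2).2⟩ ⟨y, hy⟩⟩

theorem ae_norm_supDistDeriv_le (hv : DistLeIntegralOn v S g) (hS : IsOpen S)
    (hSc : S.OrdConnected) (hg : LocallyIntegrableOn g S) (hC : C.Countable)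
    (hvC : v '' S ⊆ closure C) : ∀ᵐ t ∂volume.restrict S, ‖supDistDeriv v C t‖ ≤ ‖g t‖ := by
  filter_upwards [hv.ae_supDistDeriv_le hS hSc hg hC hvC] with t ht
  rw [Real.norm_of_nonneg (supDistDeriv_nonneg t)]
  exact ht.trans (Real.le_norm_self _)

theorem locallyIntegrableOn_supDistDeriv (hv : DistLeIntegralOn v S g) (hS : IsOpen S)
    (hSc : S.OrdConnected) (hg : LocallyIntegrableOn g S) (hC : C.Countable)
    (hvC : v '' S ⊆ closure C) : LocallyIntegrableOn (supDistDeriv v C) S :=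
  hg.of_ae_restrict_norm_le (measurable_supDistDeriv hC).aestronglyMeasurable
    (hv.ae_norm_supDistDeriv_le hS hSc hg hC hvC)

theorem memLp_supDistDeriv {p : ℝ≥0∞} (hv : DistLeIntegralOn v S g) (hS : IsOpen S)
    (hSc : S.OrdConnected) (hp : 1 ≤ p) (hg : MemLp g p (volume.restrict S))
    (hC : C.Countable) (hvC : v '' S ⊆ closure C) :
    MemLp (supDistDeriv v C) p (volume.restrict S) :=
  hg.of_le (measurable_supDistDeriv hC).aestronglyMeasurable
    (hv.ae_norm_supDistDeriv_le hS hSc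
      (locallyIntegrableOn_of_locallyIntegrable_restrict (hg.locallyIntegrable hp)) hC hvC)

end DistLeIntegralOn

theorem distLeIntegralOn_supDistDeriv {X : Type*} [PseudoMetricSpace X] {v : ℝ → X} {C : Set X}
    {S : Set ℝ} {g : ℝ → ℝ} (hv : DistLeIntegralOn v S g) (hS : IsOpen S)
    (hSc : S.OrdConnected) (hg : LocallyIntegrableOn g S) (hC : C.Countable)
    (hvC : v '' S ⊆ closure C) : DistLeIntegralOn v S (supDistDeriv v C) := by
  intro x hx y hy hxy
  refine dist_le_of_forall_abs_dist_sub_dist_le (hvC (mem_image_of_mem v hy)) fun z hz => ?_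
  have hAC := ((hv.dist_comp z).mono (hSc.out hx hy)).absolutelyContinuousOnInterval hxy
    (hg.intervalIntegrable hSc hx hy)
  have hbound : ∀ᵐ r ∂volume.restrict (Icc x y),
      |deriv (fun s => dist (v s) z) r| ≤ supDistDeriv v C r := by
    filter_upwards [ae_restrict_of_ae_restrict_of_subset (hSc.out hx hy)
      (hv.ae_abs_deriv_dist_le_supDistDeriv hS hSc hg hC)] with r hr
    exact (hr z hz).2
  calc |dist (v x) z - dist (v y) z|
      = |∫ r in x..y, deriv (fun s => dist (v s) z) r| := by
        rw [hAC.integral_deriv_eq_sub, abs_sub_comm]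
    _ ≤ ∫ r in x..y, |deriv (fun s => dist (v s) z) r| :=
        intervalIntegral.abs_integral_le_integral_abs hxy
    _ ≤ ∫ r in x..y, supDistDeriv v C r :=
        intervalIntegral.integral_mono_ae_restrict hxy hAC.intervalIntegrable_deriv.abs
          ((hv.locallyIntegrableOn_supDistDeriv hS hSc hg hC hvC).intervalIntegrable hSc hx hy)
          hbound

theorem DistLeIntegralOn.isMetricDerivOn_supDistDeriv {X : Type*} [PseudoMetricSpace X]
    {v : ℝ → X} {C : Set X} {S : Set ℝ} {g : ℝ → ℝ} (hv : DistLeIntegralOn v S g)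
    (hS : IsOpen S) (hSc : S.OrdConnected) (hg : LocallyIntegrableOn g S) (hC : C.Countable)
    (hvC : v '' S ⊆ closure C) : IsMetricDerivOn v S (supDistDeriv v C) := by
  filter_upwards [(hv.locallyIntegrableOn_supDistDeriv hS hSc hg hC hvC).ae_hasDerivAt_integral
    hS hSc, hv.ae_abs_deriv_dist_le_supDistDeriv hS hSc hg hC,
    ae_restrict_mem hS.measurableSet] with t hP hderiv htS
  have : Nonempty C := (closure_nonempty_iff.1 ⟨_, hvC (mem_image_of_mem v htS)⟩).to_subtype
  refine (tendsto_dist_div_of_hasDerivAt hP ?_ fun l hl => ?_).mono_left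
    (nhdsWithin_mono t (sdiff_subset_compl S {t}))
  · filter_upwards [nhdsWithin_le_nhds (hS.mem_nhds htS), self_mem_nhdsWithin] with s hs hst
    rw [slope_def_field, intervalIntegral.integral_same, sub_zero]
    exact (distLeIntegralOn_supDistDeriv hv hS hSc hg hC hvC).dist_div_le hs htS hst
  · obtain ⟨⟨y, hy⟩, hly⟩ := exists_lt_of_lt_ciSup hl
    exact eventually_lt_dist_div_of_hasDerivAt (hderiv y hy).1.hasDerivAt
      (fun s => abs_dist_sub_le _ _ _) hly
theorem stmt1_general {X : Type*} [MetricSpace X]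
    (a b : EReal) (p : ℝ≥0∞) (hp : 1 ≤ p) (v : ℝ → X) (m : ℝ → ℝ)
    (hm : MemLp m p (volume.restrict {x : ℝ | a < (x : EReal) ∧ (x : EReal) < b}))
    (hineq : ∀ s t : ℝ, a < (s : EReal) → s ≤ t → (t : EReal) < b →
      dist (v s) (v t) ≤ ∫ r in s..t, m r) :
    ∃ md : ℝ → ℝ,
      IsMetricDerivOn v {x : ℝ | a < (x : EReal) ∧ (x : EReal) < b} md ∧
      MemLp md p (volume.restrict {x : ℝ | a < (x : EReal) ∧ (x : EReal) < b}) ∧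
      (∀ s t : ℝ, a < (s : EReal) → s ≤ t → (t : EReal) < b →
        dist (v s) (v t) ≤ ∫ r in s..t, md r) ∧
      ∀ m' : ℝ → ℝ,
        MemLp m' p (volume.restrict {x : ℝ | a < (x : EReal) ∧ (x : EReal) < b}) →
        (∀ s t : ℝ, a < (s : EReal) → s ≤ t → (t : EReal) < b →
          dist (v s) (v t) ≤ ∫ r in s..t, m' r) →
        ∀ᵐ t ∂(volume.restrict {x : ℝ | a < (x : EReal) ∧ (x : EReal) < b}),
          md t ≤ m' t := by
  set S : Set ℝ := {x : ℝ | a < (x : EReal) ∧ (x : EReal) < b}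
  have hS : IsOpen S := isOpen_Ioo.preimage continuous_coe_real_ereal
  have hSc : S.OrdConnected := ordConnected_Ioo.preimage_mono EReal.coe_strictMono.monotone
  have hdist : ∀ g : ℝ → ℝ, DistLeIntegralOn v S g ↔ ∀ s t : ℝ, a < (s : EReal) → s ≤ t →
      (t : EReal) < b → dist (v s) (v t) ≤ ∫ r in s..t, g r := fun g =>
    ⟨fun h s t hs hst ht => h s ⟨hs, (EReal.coe_le_coe_iff.2 hst).trans_lt ht⟩ t
      ⟨hs.trans_le (EReal.coe_le_coe_iff.2 hst), ht⟩ hst,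
      fun h s hs t ht hst => h s t hs.1 hst ht.2⟩
  have hloc : ∀ g : ℝ → ℝ, MemLp g p (volume.restrict S) → LocallyIntegrableOn g S :=
    fun g hg => locallyIntegrableOn_of_locallyIntegrable_restrict (hg.locallyIntegrable hp)
  have hv := (hdist m).2 hineq
  have hmloc := hloc m hm
  obtain ⟨C, -, hC, hvC⟩ := ((hv.continuousOn hS hSc hmloc).isSeparable_image
    (.of_separableSpace S)).exists_countable_dense_subset
  refine ⟨supDistDeriv v C, hv.isMetricDerivOn_supDistDeriv hS hSc hmloc hC hvC,
    hv.memLp_supDistDeriv hS hSc hp hm hC hvC,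
    (hdist _).1 (distLeIntegralOn_supDistDeriv hv hS hSc hmloc hC hvC),
    fun m' hm' hineq' => ?_⟩
  exact ((hdist m').2 hineq').ae_supDistDeriv_le hS hSc (hloc m' hm') hC hvC

/-- Existence of the metric derivative of a curve in `AC^p(a,b;X)`:
it exists a.e., belongs to `L^p`, realizes the defining integral estimate, and is
(a.e.) minimal among all admissible `L^p` densities. -/
theorem stmt1 {X : Type*} [MetricSpace X] [CompleteSpace X]
    (a b : EReal) (hab : a < b) (p : ℝ≥0∞) (hp : 1 ≤ p) (v : ℝ → X) (m : ℝ → ℝ)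
    (hm : MemLp m p (volume.restrict {x : ℝ | a < (x : EReal) ∧ (x : EReal) < b}))
    (hineq : ∀ s t : ℝ, a < (s : EReal) → s ≤ t → (t : EReal) < b →
      dist (v s) (v t) ≤ ∫ r in s..t, m r) :
    ∃ md : ℝ → ℝ,
      IsMetricDerivOn v {x : ℝ | a < (x : EReal) ∧ (x : EReal) < b} md ∧
      MemLp md p (volume.restrict {x : ℝ | a < (x : EReal) ∧ (x : EReal) < b}) ∧
      (∀ s t : ℝ, a < (s : EReal) → s ≤ t → (t : EReal) < b →
        dist (v s) (v t) ≤ ∫ r in s..t, md r) ∧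
      ∀ m' : ℝ → ℝ,
        MemLp m' p (volume.restrict {x : ℝ | a < (x : EReal) ∧ (x : EReal) < b}) →
        (∀ s t : ℝ, a < (s : EReal) → s ≤ t → (t : EReal) < b →
          dist (v s) (v t) ≤ ∫ r in s..t, m' r) →
        ∀ᵐ t ∂(volume.restrict {x : ℝ | a < (x : EReal) ∧ (x : EReal) < b}),
          md t ≤ m' t :=
  stmt1_general a b p hp v m hm hineq
end
end

section
/- Let E : M → (-∞,+∞] be a proper functional with strong upper gradient g, and let v : [0,+∞) → M be a p-gradient flow of E. Suppose for some t₀ ≥ 0, E restricted to the closure of I_{t₀}(v) = {v(t): t ≥ t₀} is bounded from below, and g restricted to the closure of I_{t₀}(v) is lower semicontinuous. Then every point φ of the ω-limit set ω(v) satisfies g(φ) = 0, i.e. ω(v) is contained in the set of equilibrium points E_g = g⁻¹({0}). -/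
/-!
By the energy-dissipation inequality, the integral of the dissipation rate
`g(v)^{p'}/p' + |v'|^p/p` over `(s, s + δ]` is at most `E(v s) - E(v (s + δ))`, which tends to `0`
because `E ∘ v` is non-increasing and bounded below. If an ω-limit point `φ` had `g φ > κ > 0`,
lower semicontinuity would give `g > κ` on a ball around `φ`. By Young's inequality
`|v'| ≤ |v'|^p/p + 1`, the flow started at a late time `s` with `v s` close to `φ` stays in that
ball during `(s, s + δ]`, so the dissipation there is at least `κ^{p'} δ / p'`: a contradiction.
-/

open MeasureTheory Set Filter Topology Metric
open scoped ENNReal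

noncomputable section

theorem AntitoneOn.exists_tendsto_atTop {α β : Type*} [LinearOrder α]
    [ConditionallyCompleteLinearOrder β] [TopologicalSpace β] [OrderTopology β]
    {f : α → β} {a : α} (hf : AntitoneOn f (Ici a)) (hb : BddBelow (f '' Ici a)) :
    ∃ L, Tendsto f atTop (𝓝 L) := by
  have hanti : Antitone fun t => f (max a t) := fun x y hxy =>
    hf (le_max_left a x) (le_max_left a y) (max_le_max le_rfl hxy)
  have hrange : range (fun t => f (max a t)) ⊆ f '' Ici a := by
    rintro _ ⟨t, rfl⟩
    exact mem_image_of_mem f (le_max_left a t)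
  refine ⟨_, (tendsto_atTop_ciInf hanti (hb.mono hrange)).congr' ?_⟩
  filter_upwards [eventually_ge_atTop a] with t ht
  rw [max_eq_right ht]

def dissipationRate {X : Type*} (g : X → ℝ≥0∞) (p : ℝ) (v : ℝ → X) (md : ℝ → ℝ) (t : ℝ) :
    ℝ≥0∞ :=
  g (v t) ^ (p / (p - 1)) / ENNReal.ofReal (p / (p - 1)) + ENNReal.ofReal (md t ^ p / p)

theorem le_setLIntegral_dissipationRate {X : Type*} {g : X → ℝ≥0∞} {p : ℝ} {v : ℝ → X}
    {md : ℝ → ℝ} (hp : 1 < p) {S : Set ℝ} (hS : MeasurableSet S) {κ : ℝ≥0∞}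
    (hκ : ∀ t ∈ S, κ ≤ g (v t)) :
    κ ^ (p / (p - 1)) / ENNReal.ofReal (p / (p - 1)) * volume S ≤
      ∫⁻ t in S, dissipationRate g p v md t := by
  have hp' : 0 ≤ p / (p - 1) := div_nonneg (by linarith) (by linarith)
  rw [← setLIntegral_const]
  refine setLIntegral_mono' hS fun t ht => le_add_right ?_
  gcongr
  exact hκ t ht

namespace IsPGradientFlow

variable {X : Type*} [PseudoMetricSpace X] {E : X → EReal} {g : X → ℝ≥0∞} {p : ℝ}
  {T : EReal} {v : ℝ → X} {md : ℝ → ℝ}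

theorem lintegral_dissipationRate_le (hflow : IsPGradientFlow E g p T v md) {a b : ℝ}
    (ha : 0 < a) (hab : a ≤ b) (hb : (b : EReal) < T) :
    ∫⁻ t in Ioc a b, dissipationRate g p v md t ≤
      ENNReal.ofReal ((E (v a)).toReal - (E (v b)).toReal) := by
  obtain ⟨-, -, -, -, -, hanti, hdiss⟩ := hflow
  set f : ℝ → ℝ := fun t => (E (v t)).toReal
  have hIcc : Icc a b ⊆ ITo T := fun t ht =>
    ⟨ha.trans_le ht.1, (EReal.coe_le_coe_iff.2 ht.2).trans_lt hb⟩
  set S := Ioo a b ∩ {t | DifferentiableAt ℝ f t}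
  have hS : MeasurableSet S := measurableSet_Ioo.inter (measurableSet_of_differentiableAt ℝ f)
  have hSIcc : S ⊆ Icc a b := fun t ht => Ioo_subset_Icc_self ht.1
  have hfS : f '' S ⊆ Icc (f b) (f a) := by
    rintro _ ⟨t, ht, rfl⟩
    exact ⟨hanti (hIcc (hSIcc ht)) (hIcc (right_mem_Icc.2 hab)) (hSIcc ht).2,
      hanti (hIcc (left_mem_Icc.2 hab)) (hIcc (hSIcc ht)) (hSIcc ht).1⟩
  have hrate : ∀ᵐ t ∂volume.restrict (Ioo a b),
      dissipationRate g p v md t ≤ S.indicator (fun t => ENNReal.ofReal (-deriv f t)) t := by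
    filter_upwards [ae_restrict_of_ae_restrict_of_subset (Ioo_subset_Icc_self.trans hIcc) hdiss,
      ae_restrict_mem measurableSet_Ioo] with t ⟨D, hD, _, hDrate⟩ ht
    rw [indicator_of_mem (show t ∈ S from ⟨ht, hD.differentiableAt⟩), hD.deriv]
    exact hDrate
  calc ∫⁻ t in Ioc a b, dissipationRate g p v md t
      = ∫⁻ t in Ioo a b, dissipationRate g p v md t := by
        rw [Measure.restrict_congr_set Ioo_ae_eq_Ioc]
    _ ≤ ∫⁻ t in Ioo a b, S.indicator (fun t => ENNReal.ofReal (-deriv f t)) t :=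
        lintegral_mono_ae hrate
    _ = ∫⁻ t in S, ENNReal.ofReal (-deriv f t) := by
        rw [lintegral_indicator hS, Measure.restrict_restrict hS, inter_eq_left.2 inter_subset_left]
    _ = volume (f '' S) := lintegral_deriv_eq_volume_image_of_antitoneOn hS
        (fun t ht => ht.2.hasDerivAt.hasDerivWithinAt) (hanti.mono (hSIcc.trans hIcc))
    _ ≤ volume (Icc (f b) (f a)) := measure_mono hfS
    _ = ENNReal.ofReal (f a - f b) := Real.volume_Icc

theorem edist_le_lintegral_dissipationRate (hflow : IsPGradientFlow E g p T v md) (hp : 1 < p)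
    {s t : ℝ} (hs : 0 < s) (hst : s ≤ t) (ht : (t : EReal) < T) :
    edist (v s) (v t) ≤
      (∫⁻ r in Ioc s t, dissipationRate g p v md r) + ENNReal.ofReal (t - s) := by
  obtain ⟨hmd0, hint, hdist, -⟩ := hflow
  have hmd0' : ∀ r ∈ Ioc s t, 0 ≤ md r := fun r hr =>
    hmd0 r ⟨hs.trans hr.1, (EReal.coe_le_coe_iff.2 hr.2).trans_lt ht⟩
  have hyoung : ∀ r ∈ Ioc s t, ENNReal.ofReal (md r) ≤ dissipationRate g p v md r + 1 := by
    intro r hr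
    have hpq := Real.HolderConjugate.conjExponent hp
    have h := Real.young_inequality_of_nonneg (hmd0' r hr) zero_le_one hpq
    have hq : 1 / Real.conjExponent p ≤ 1 := div_le_one_of_le₀ hpq.symm.lt.le hpq.symm.nonneg
    rw [mul_one, Real.one_rpow] at h
    calc ENNReal.ofReal (md r) ≤ ENNReal.ofReal (md r ^ p / p + 1) :=
          ENNReal.ofReal_le_ofReal (by linarith)
      _ ≤ dissipationRate g p v md r + 1 := by
          rw [ENNReal.ofReal_add (by have := hmd0' r hr; positivity) zero_le_one,
            ENNReal.ofReal_one]
          gcongr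
          exact le_add_self
  calc edist (v s) (v t) = ENNReal.ofReal (dist (v s) (v t)) := edist_dist _ _
    _ ≤ ENNReal.ofReal (∫ r in Ioc s t, md r) := by
        rw [← intervalIntegral.integral_of_le hst]
        exact ENNReal.ofReal_le_ofReal (hdist s t hs hst ht)
    _ = ∫⁻ r in Ioc s t, ENNReal.ofReal (md r) :=
        ofReal_integral_eq_lintegral_ofReal (hint s t hs hst ht)
          ((ae_restrict_iff' measurableSet_Ioc).2 (ae_of_all _ hmd0'))
    _ ≤ ∫⁻ r in Ioc s t, (dissipationRate g p v md r + 1) :=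
        setLIntegral_mono' measurableSet_Ioc hyoung
    _ = (∫⁻ r in Ioc s t, dissipationRate g p v md r) + ENNReal.ofReal (t - s) := by
        rw [lintegral_add_right _ measurable_const, setLIntegral_one, Real.volume_Ioc]

theorem exists_mem_Ioc_lt_and_dist_lt (hflow : IsPGradientFlow E g p T v md) (hp : 1 < p)
    {s δ : ℝ} (hs : 0 < s) (hδ : 0 ≤ δ) (hsδ : ((s + δ : ℝ) : EReal) < T) {κ : ℝ≥0∞}
    (hsmall_g : ∫⁻ t in Ioc s (s + δ), dissipationRate g p v md t <
      κ ^ (p / (p - 1)) / ENNReal.ofReal (p / (p - 1)) * ENNReal.ofReal δ)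
    (hsmall_v : ∫⁻ t in Ioc s (s + δ), dissipationRate g p v md t < ENNReal.ofReal δ) :
    ∃ t ∈ Ioc s (s + δ), g (v t) < κ ∧ dist (v s) (v t) < 2 * δ := by
  have hnear : ∀ t ∈ Ioc s (s + δ), dist (v s) (v t) < 2 * δ := by
    rintro t ⟨hst, hts⟩
    have hlt : ∫⁻ r in Ioc s t, dissipationRate g p v md r < ENNReal.ofReal δ :=
      (lintegral_mono_set (Ioc_subset_Ioc_right hts)).trans_lt hsmall_v
    rw [← edist_lt_ofReal, two_mul, ENNReal.ofReal_add hδ hδ]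
    calc edist (v s) (v t)
        ≤ (∫⁻ r in Ioc s t, dissipationRate g p v md r) + ENNReal.ofReal (t - s) :=
          hflow.edist_le_lintegral_dissipationRate hp hs hst.le
            ((EReal.coe_le_coe_iff.2 hts).trans_lt hsδ)
      _ < ENNReal.ofReal δ + ENNReal.ofReal δ :=
          ENNReal.add_lt_add_of_lt_of_le ENNReal.ofReal_ne_top hlt
            (ENNReal.ofReal_le_ofReal (by linarith))
  obtain ⟨t, ht, hgt⟩ : ∃ t ∈ Ioc s (s + δ), g (v t) < κ := by
    by_contra! h
    have hlower := le_setLIntegral_dissipationRate (md := md) hp measurableSet_Ioc h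
    rw [Real.volume_Ioc, add_sub_cancel_left] at hlower
    exact hlower.not_gt hsmall_g
  exact ⟨t, ht, hgt, hnear t ht⟩

theorem tendsto_lintegral_dissipationRate_Ioc (hflow : IsPGradientFlow E g p ⊤ v md) {a c : ℝ}
    (ha : 0 < a) (hc : ∀ t ≥ a, (c : EReal) ≤ E (v t)) {δ : ℝ} (hδ : 0 ≤ δ) :
    Tendsto (fun s => ∫⁻ t in Ioc s (s + δ), dissipationRate g p v md t) atTop (𝓝 0) := by
  set f : ℝ → ℝ := fun t => (E (v t)).toReal
  have hdissle : ∀ s > 0, ∫⁻ t in Ioc s (s + δ), dissipationRate g p v md t ≤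
      ENNReal.ofReal (f s - f (s + δ)) := fun s hs =>
    hflow.lintegral_dissipationRate_le hs (by linarith) (EReal.coe_lt_top _)
  obtain ⟨-, -, -, -, hfinite, hanti, -⟩ := hflow
  have hIci : Ici a ⊆ ITo ⊤ := fun t ht => ⟨ha.trans_le ht, EReal.coe_lt_top t⟩
  have hbdd : BddBelow (f '' Ici a) := by
    refine ⟨c, ?_⟩
    rintro _ ⟨t, ht, rfl⟩
    simpa using EReal.toReal_le_toReal (hc t ht) (EReal.coe_ne_bot c) (hfinite t (hIci ht)).1
  obtain ⟨L, hL⟩ := AntitoneOn.exists_tendsto_atTop (hanti.mono hIci) hbdd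
  have hdrop : Tendsto (fun s => ENNReal.ofReal (f s - f (s + δ))) atTop (𝓝 0) := by
    simpa using ENNReal.tendsto_ofReal
      (hL.sub (hL.comp (tendsto_atTop_add_const_right _ δ tendsto_id)))
  refine tendsto_of_tendsto_of_tendsto_of_le_of_le' tendsto_const_nhds hdrop
    (Eventually.of_forall fun _ => zero_le) ?_
  filter_upwards [eventually_gt_atTop 0] using hdissle

end IsPGradientFlow

theorem stmt6_general {X : Type*} [MetricSpace X]
    (E : X → EReal) (g : X → ℝ≥0∞)
    (p : ℝ) (hp : 1 < p) (v : ℝ → X) (md : ℝ → ℝ)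
    (hflow : IsPGradientFlow E g p ⊤ v md)
    (t₀ : ℝ)
    (hbdd : ∃ c : ℝ, ∀ x ∈ closure (v '' Ici t₀), (c : EReal) ≤ E x)
    (hglsc : LowerSemicontinuousOn g (closure (v '' Ici t₀))) :
    ∀ φ : X,
      (∃ tn : ℕ → ℝ, Tendsto tn atTop atTop ∧
        Tendsto (fun n => v (tn n)) atTop (nhds φ)) →
      g φ = 0 := by
  rintro φ ⟨tn, htn, hφ⟩
  by_contra hgφ
  obtain ⟨c, hc⟩ := hbdd
  have hφS : φ ∈ closure (v '' Ici t₀) := mem_closure_of_tendsto hφ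
    ((htn.eventually_ge_atTop t₀).mono fun n hn => mem_image_of_mem v hn)
  obtain ⟨κ, hκ0, hκφ⟩ := exists_between (pos_iff_ne_zero.2 hgφ)
  have hκtop : κ ≠ ⊤ := (hκφ.trans_le le_top).ne
  obtain ⟨r, hr, hball⟩ := mem_nhdsWithin_iff.1 (hglsc φ hφS κ hκφ)
  have hr3 : 0 < r / 3 := by positivity
  have hvS : ∀ t ≥ max t₀ 1, v t ∈ closure (v '' Ici t₀) := fun t ht =>
    subset_closure (mem_image_of_mem v (le_of_max_le_left ht))
  have hdiss := hflow.tendsto_lintegral_dissipationRate_Ioc (lt_max_of_lt_right one_pos)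
    (fun t ht => hc _ (hvS t ht)) hr3.le
  have hκr : 0 < κ ^ (p / (p - 1)) / ENNReal.ofReal (p / (p - 1)) * ENNReal.ofReal (r / 3) :=
    ENNReal.mul_pos (ENNReal.div_pos (ENNReal.rpow_pos hκ0 hκtop).ne' ENNReal.ofReal_ne_top).ne'
      (ENNReal.ofReal_pos.2 hr3).ne'
  obtain ⟨n, hn, hnφ, hng, hnv⟩ := ((htn.eventually_ge_atTop (max t₀ 1)).and <|
    (tendsto_nhds.1 hφ (r / 3) hr3).and <| htn.eventually <|
      (hdiss.eventually_lt_const hκr).and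
        (hdiss.eventually_lt_const (ENNReal.ofReal_pos.2 hr3))).exists
  obtain ⟨t, ht, hgt, hdt⟩ := hflow.exists_mem_Ioc_lt_and_dist_lt hp
    ((lt_max_of_lt_right one_pos).trans_le hn) hr3.le (EReal.coe_lt_top _) hng hnv
  have htφ : dist (v t) φ < r := by linarith [dist_triangle_left (v t) φ (v (tn n))]
  exact hgt.not_gt (hball ⟨mem_ball.2 htφ, hvS t (hn.trans ht.1.le)⟩)

/-- ω-limit points of `p`-gradient flows are equilibrium points: if `E`
is bounded below on the closure of the image `{v t : t ≥ t₀}` and `g` is lower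
semicontinuous there, then `g φ = 0` for every ω-limit point `φ` of `v`. -/
theorem stmt6 {X : Type*} [MetricSpace X] [CompleteSpace X]
    (E : X → EReal) (g : X → ℝ≥0∞)
    (hproper : ∃ x, E x ≠ ⊤) (hbot : ∀ x, E x ≠ ⊥)
    (hsug : StrongUpperGradient E g)
    (p : ℝ) (hp : 1 < p) (v : ℝ → X) (md : ℝ → ℝ)
    (hflow : IsPGradientFlow E g p ⊤ v md)
    (t₀ : ℝ) (ht₀ : 0 ≤ t₀)
    (hbdd : ∃ c : ℝ, ∀ x ∈ closure (v '' Ici t₀), (c : EReal) ≤ E x)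
    (hglsc : LowerSemicontinuousOn g (closure (v '' Ici t₀))) :
    ∀ φ : X,
      (∃ tn : ℕ → ℝ, Tendsto tn atTop atTop ∧
        Tendsto (fun n => v (tn n)) atTop (nhds φ)) →
      g φ = 0 :=
  stmt6_general E g p hp v md hflow t₀ hbdd hglsc
end
end

section
/- Let λ ∈ ℝ and let E : M → (-∞,+∞] be a proper, λ-geodesically convex functional on a length space (M,d). Then for every u ∈ D(E), the descending slope satisfies |D⁻E|(u) = sup_{v ≠ u} [ (E(u) − E(v))/d(u,v) + (λ/2) d(u,v) ]⁺, and consequently E(u) − E(v) ≤ |D⁻E|(u)·d(v,u) − (λ/2) d²(v,u) for every v ∈ M. -/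
open MeasureTheory Set Filter Topology Metric
open scoped ENNReal

noncomputable section

/-! Along a geodesic `γ` from `u` to `w`, `lam`-convexity gives
`(E u - E (γ t)) / d(u, γ t) ≥ (E u - E w) / d(u, w) + (lam / 2) (1 - t) d(u, w)`, and `γ t → u`
as `t → 0⁺`; so every bracket of the supremum is bounded by the slope. Conversely, each difference
quotient `(E u - E v)⁺ / d(u, v)` exceeds the bracket at `v` by at most `|lam| / 2 · d(u, v)`, which
vanishes as `v → u`. -/

lemma erealPos_eq_toENNReal : ErealPos = EReal.toENNReal := rfl

lemma erealPos_coe (r : ℝ) : ErealPos r = ENNReal.ofReal r := rfl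

lemma tendsto_nhdsNE_of_dist_eq_mul {X : Type*} [MetricSpace X] {γ : ℝ → X} {u : X} {c : ℝ}
    (hc : 0 < c) (hγ : ∀ t ∈ Ioo (0 : ℝ) 1, dist u (γ t) = t * c) :
    Tendsto γ (𝓝[>] 0) (𝓝[≠] u) := by
  have hγ' : ∀ᶠ t in 𝓝[>] (0 : ℝ), dist u (γ t) = t * c :=
    eventually_of_mem (Ioo_mem_nhdsGT one_pos) hγ
  refine tendsto_nhdsWithin_iff.2 ⟨?_, ?_⟩
  · rw [tendsto_iff_dist_tendsto_zero]
    have hlin : Tendsto (fun t : ℝ => t * c) (𝓝[>] 0) (𝓝 0) := by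
      simpa using ((continuous_mul_const c).tendsto 0).mono_left nhdsWithin_le_nhds
    refine hlin.congr' ?_
    filter_upwards [hγ'] with t ht
    rw [dist_comm, ht]
  · filter_upwards [hγ', self_mem_nhdsWithin] with t ht (ht0 : 0 < t)
    rw [mem_compl_singleton_iff, ← dist_pos, dist_comm, ht]
    positivity

lemma ofReal_div_le_toENNReal_sub_div {a b d t lam : ℝ} {x : EReal} (ht : 0 < t) (hd : 0 < d)
    (hx : x ≤ ((1 - t) * a + t * b - lam / 2 * (t * (1 - t)) * d ^ 2 : ℝ)) :
    ENNReal.ofReal ((a - b + lam / 2 * (1 - t) * d ^ 2) / d) ≤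
      EReal.toENNReal (a - x) / ENNReal.ofReal (t * d) := by
  set K := a - b + lam / 2 * (1 - t) * d ^ 2
  have hsub : ((t * K : ℝ) : EReal) ≤ (a : EReal) - x :=
    calc ((t * K : ℝ) : EReal)
        = ((a : ℝ) : EReal) - ((1 - t) * a + t * b - lam / 2 * (t * (1 - t)) * d ^ 2 : ℝ) := by
          norm_cast; ring
      _ ≤ (a : EReal) - x := EReal.sub_le_sub le_rfl hx
  calc ENNReal.ofReal (K / d)
      = ENNReal.ofReal (t * K / (t * d)) := by rw [mul_div_mul_left _ _ ht.ne']
    _ = ENNReal.ofReal (t * K) / ENNReal.ofReal (t * d) := ENNReal.ofReal_div_of_pos (by positivity)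
    _ ≤ EReal.toENNReal (a - x) / ENNReal.ofReal (t * d) :=
        ENNReal.div_le_div_right (EReal.toENNReal_le_toENNReal hsub) _

lemma GeodesicConvexWith.le_descSlope {X : Type*} [MetricSpace X] {E : X → EReal} {lam : ℝ}
    (hconv : GeodesicConvexWith E lam) (hbot : ∀ x, E x ≠ ⊥) {u w : X} (hu : E u ≠ ⊤)
    (hw : w ≠ u) :
    ErealPos (E u - E w + ((lam / 2 * dist u w ^ 2 : ℝ) : EReal)) / ENNReal.ofReal (dist u w) ≤
      descSlope E u := by
  by_cases hwtop : E w = ⊤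
  · simp [hwtop, erealPos_eq_toENNReal]
  set d := dist u w
  have hd : 0 < d := dist_pos.2 hw.symm
  obtain ⟨a, ha⟩ : ∃ a : ℝ, E u = a := ⟨_, (EReal.coe_toReal hu (hbot u)).symm⟩
  obtain ⟨b, hb⟩ : ∃ b : ℝ, E w = b := ⟨_, (EReal.coe_toReal hwtop (hbot w)).symm⟩
  obtain ⟨γ, hγ0, -, hγd, hγE⟩ := hconv u w hu hwtop
  have hdist : ∀ t ∈ Ioo (0 : ℝ) 1, dist u (γ t) = t * d := fun t ht => by
    simpa [hγ0] using hγd 0 t le_rfl ht.1.le ht.2.le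
  set q : ℝ → ℝ≥0∞ := fun t => ENNReal.ofReal ((a - b + lam / 2 * (1 - t) * d ^ 2) / d)
  have hq : ∀ t ∈ Ioo (0 : ℝ) 1,
      q t ≤ ErealPos (E u - E (γ t)) / ENNReal.ofReal (dist u (γ t)) := by
    intro t ht
    rw [hdist t ht, ha]
    refine ofReal_div_le_toENNReal_sub_div ht.1 hd ?_
    have := hγE t ht.1.le ht.2.le
    rw [ha, hb] at this
    exact_mod_cast this
  have hq_cont : Continuous q := ENNReal.continuous_ofReal.comp (by fun_prop)
  have hq_lim : Tendsto q (𝓝[>] 0) (𝓝 (q 0)) :=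
    (hq_cont.tendsto 0).mono_left nhdsWithin_le_nhds
  calc ErealPos (E u - E w + ((lam / 2 * d ^ 2 : ℝ) : EReal)) / ENNReal.ofReal d
      = q 0 := by
        rw [ha, hb, erealPos_eq_toENNReal, ← EReal.coe_sub, ← EReal.coe_add,
          EReal.real_coe_toENNReal, ← ENNReal.ofReal_div_of_pos hd]
        norm_num [q]
    _ = limsup q (𝓝[>] 0) := hq_lim.limsup_eq.symm
    _ ≤ limsup (fun t => ErealPos (E u - E (γ t)) / ENNReal.ofReal (dist u (γ t))) (𝓝[>] 0) :=
        limsup_le_limsup (eventually_of_mem (Ioo_mem_nhdsGT one_pos) hq)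
    _ ≤ descSlope E u :=
        (tendsto_nhdsNE_of_dist_eq_mul hd hdist).limsup_comp_le_limsup
          (u := fun v => ErealPos (E u - E v) / ENNReal.ofReal (dist u v))

lemma descSlope_le_iSup {X : Type*} [MetricSpace X] (E : X → EReal) (lam : ℝ) (u : X) :
    descSlope E u ≤ ⨆ (w : X) (_ : w ≠ u),
      ErealPos (E u - E w + ((lam / 2 * dist u w ^ 2 : ℝ) : EReal)) /
        ENNReal.ofReal (dist u w) := by
  set R := ⨆ (w : X) (_ : w ≠ u),
    ErealPos (E u - E w + ((lam / 2 * dist u w ^ 2 : ℝ) : EReal)) / ENNReal.ofReal (dist u w)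
  rcases (𝓝[≠] u).eq_or_neBot with hisolated | _
  · simp [descSlope, hisolated]
  have hquot : ∀ v ≠ u, ErealPos (E u - E v) / ENNReal.ofReal (dist u v) ≤
      R + ENNReal.ofReal (|lam| / 2 * dist u v) := by
    intro v hv
    have hd : 0 < dist u v := dist_pos.2 hv.symm
    set c := lam / 2 * dist u v ^ 2 with hc
    have hnum : ErealPos (E u - E v) ≤
        ErealPos (E u - E v + c) + ENNReal.ofReal (|lam| / 2 * dist u v * dist u v) :=
      calc ErealPos (E u - E v)
          = ErealPos (E u - E v + c + ((-c : ℝ) : EReal)) := by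
            rw [EReal.coe_neg, ← sub_eq_add_neg, EReal.add_sub_cancel_right]
        _ ≤ ErealPos (E u - E v + c) + ErealPos ((-c : ℝ) : EReal) := EReal.toENNReal_add_le
        _ ≤ ErealPos (E u - E v + c) + ENNReal.ofReal (|lam| / 2 * dist u v * dist u v) := by
            rw [erealPos_coe]
            gcongr
            rw [hc]
            nlinarith [neg_abs_le lam, sq_nonneg (dist u v)]
    calc ErealPos (E u - E v) / ENNReal.ofReal (dist u v)
        ≤ (ErealPos (E u - E v + c) + ENNReal.ofReal (|lam| / 2 * dist u v * dist u v)) /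
            ENNReal.ofReal (dist u v) := ENNReal.div_le_div_right hnum _
      _ = ErealPos (E u - E v + c) / ENNReal.ofReal (dist u v) +
            ENNReal.ofReal (|lam| / 2 * dist u v) := by
          rw [ENNReal.add_div, ← ENNReal.ofReal_div_of_pos hd, mul_div_cancel_right₀ _ hd.ne']
      _ ≤ R + ENNReal.ofReal (|lam| / 2 * dist u v) := by
          gcongr
          exact le_iSup₂ (f := fun w (_ : w ≠ u) =>
            ErealPos (E u - E w + ((lam / 2 * dist u w ^ 2 : ℝ) : EReal)) /
              ENNReal.ofReal (dist u w)) v hv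
  have hlim : Tendsto (fun v => R + ENNReal.ofReal (|lam| / 2 * dist u v)) (𝓝[≠] u) (𝓝 R) := by
    have hcont : Continuous (fun v => R + ENNReal.ofReal (|lam| / 2 * dist u v)) :=
      continuous_const.add (ENNReal.continuous_ofReal.comp (by fun_prop))
    simpa using (hcont.tendsto u).mono_left nhdsWithin_le_nhds
  calc descSlope E u
      ≤ limsup (fun v => R + ENNReal.ofReal (|lam| / 2 * dist u v)) (𝓝[≠] u) :=
        limsup_le_limsup (eventually_mem_nhdsWithin.mono hquot)
    _ = R := hlim.limsup_eq

lemma le_coe_sub_of_toENNReal_add_le {x : EReal} {c : ℝ} {y : ℝ≥0∞}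
    (h : (x + c).toENNReal ≤ y) : x ≤ (y : EReal) - c := by
  rw [EReal.le_sub_iff_add_le (Or.inl (EReal.coe_ne_bot c)) (Or.inl (EReal.coe_ne_top c))]
  calc x + c ≤ ((x + c).toENNReal : EReal) := EReal.coe_toENNReal_eq_max ▸ le_max_right _ _
    _ ≤ y := EReal.coe_ennreal_le_coe_ennreal_iff.2 h

lemma GeodesicConvexWith.descSlope_eq_iSup {X : Type*} [MetricSpace X] {E : X → EReal}
    {lam : ℝ} (hconv : GeodesicConvexWith E lam) (hbot : ∀ x, E x ≠ ⊥) {u : X} (hu : E u ≠ ⊤) :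
    descSlope E u = ⨆ (w : X) (_ : w ≠ u),
      ErealPos (E u - E w + ((lam / 2 * dist u w ^ 2 : ℝ) : EReal)) / ENNReal.ofReal (dist u w) :=
  le_antisymm (descSlope_le_iSup E lam u) (iSup₂_le fun _ hw => hconv.le_descSlope hbot hu hw)

lemma GeodesicConvexWith.sub_le_descSlope_mul {X : Type*} [MetricSpace X] {E : X → EReal}
    {lam : ℝ} (hconv : GeodesicConvexWith E lam) (hbot : ∀ x, E x ≠ ⊥) {u : X} (hu : E u ≠ ⊤)
    (w : X) :
    E u - E w ≤ ((descSlope E u * ENNReal.ofReal (dist w u) : ℝ≥0∞) : EReal) -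
      ((lam / 2 * dist w u ^ 2 : ℝ) : EReal) := by
  rw [dist_comm w u]
  refine le_coe_sub_of_toENNReal_add_le ?_
  rcases eq_or_ne w u with rfl | hw
  · simp [EReal.toENNReal_of_nonpos EReal.sub_self_le_zero]
  · have hd : ENNReal.ofReal (dist u w) ≠ 0 := by simpa using dist_pos.2 hw.symm
    exact (ENNReal.div_le_iff hd ENNReal.ofReal_ne_top).1 (hconv.le_descSlope hbot hu hw)

theorem stmt7_general {X : Type*} [MetricSpace X]
    (E : X → EReal) (lam : ℝ)
    (hbot : ∀ x, E x ≠ ⊥)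
    (hconv : GeodesicConvexWith E lam) :
    ∀ u : X, E u ≠ ⊤ →
      (descSlope E u = ⨆ (w : X) (_ : w ≠ u),
        ErealPos (E u - E w + ((lam / 2 * dist u w ^ 2 : ℝ) : EReal)) /
          ENNReal.ofReal (dist u w)) ∧
      ∀ w : X,
        E u - E w ≤ ((descSlope E u * ENNReal.ofReal (dist w u) : ℝ≥0∞) : EReal) -
          ((lam / 2 * dist w u ^ 2 : ℝ) : EReal) :=
  fun _ hu => ⟨hconv.descSlope_eq_iSup hbot hu, hconv.sub_le_descSlope_mul hbot hu⟩

/-- Representation of the descending slope of a `lam`-geodesically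
convex functional on a length space:
`|D⁻E|(u) = sup_{w ≠ u} [(E u − E w)/d + (lam/2) d]⁺` (written here with the bracket
multiplied through by `d`), and consequently
`E u − E w ≤ |D⁻E|(u)·d(w,u) − (lam/2) d²(w,u)` for every `w`. -/
theorem stmt7 {X : Type*} [MetricSpace X] (hlen : IsLengthSpace X)
    (E : X → EReal) (lam : ℝ)
    (hproper : ∃ x, E x ≠ ⊤) (hbot : ∀ x, E x ≠ ⊥)
    (hconv : GeodesicConvexWith E lam) :
    ∀ u : X, E u ≠ ⊤ →
      (descSlope E u = ⨆ (w : X) (_ : w ≠ u),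
        ErealPos (E u - E w + ((lam / 2 * dist u w ^ 2 : ℝ) : EReal)) /
          ENNReal.ofReal (dist u w)) ∧
      ∀ w : X,
        E u - E w ≤ ((descSlope E u * ENNReal.ofReal (dist w u) : ℝ≥0∞) : EReal) -
          ((lam / 2 * dist w u ^ 2 : ℝ) : EReal) :=
  stmt7_general E lam hbot hconv
end
end

section
/- Let E : M → (-∞,+∞] be a proper functional with strong upper gradient g on a complete metric space, and let v : [0,+∞) → M be a p-gradient flow of E with nonempty ω-limit set. Suppose E is lower semicontinuous on the closure of {v(t) : t ≥ t̄} for some t̄ ≥ 0, and φ ∈ ω(v) is an equilibrium point (g(φ)=0) such that the ball B(φ,ε) satisfies: E(w) > E(φ) implies g(w) > 0 for w ∈ B(φ,ε). If there is a strictly increasing θ ∈ W^{1,1}_loc(ℝ), continuous, with θ(0)=0 and |{s : θ(s) > 0, θ'(s) = 0}| = 0, such that θ'(E(w)−E(φ))·g(w) ≥ 1 for all w in U_ε = B(φ,ε) ∩ {E(·) > E(φ)} ∩ {θ'(E(·)−E(φ)) > 0}, then v has finite length and lim_{t→∞} v(t) = φ in M. -/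
open MeasureTheory Set Filter Topology Metric
open scoped ENNReal

noncomputable section

/-!
Write `e t = E (v t)` and `c = E φ`. Lower semicontinuity of `E` along the times `tₙ` and the
monotonicity of `e` give `c ≤ e`. At almost every time with `e' < 0`, the null set condition on `θ`,
transported through the change of variables `σ = e t - c` (injective where `e' ≠ 0`), shows that
the Kurdyka–Łojasiewicz inequality applies; combined with Young's inequality and the dissipation
inequality it gives `|v'| ≤ θ'(e - c) (-e')` while `v` stays in `B(φ, ε)`. Integrating,
the length of `v` on `[s, t]` is at most `θ (e s - c) - θ (e t - c)`. Starting at a time `tₙ` at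
which `v` is close to `φ` and `θ (e - c)` is close to its limit, a first exit time argument keeps
`v` in the ball forever, which yields both the finite length and `dist (v t) φ → 0`.
-/

theorem AntitoneOn.strictAntiOn_of_hasDerivAt_ne_zero {f f' : ℝ → ℝ} {S T : Set ℝ}
    (hf : AntitoneOn f T) (hT : T.OrdConnected) (hST : S ⊆ T)
    (hd : ∀ x ∈ S, HasDerivAt f (f' x) x ∧ f' x ≠ 0) : StrictAntiOn f S := by
  intro a ha b hb hab
  refine (hf (hST ha) (hST hb) hab.le).lt_of_ne fun hfab => (hd a ha).2 ?_
  have hconst : ∀ x ∈ Ioc a b, f x = f a := fun x hx =>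
    have hxT : x ∈ T := hT.out (hST ha) (hST hb) ⟨hx.1.le, hx.2⟩
    le_antisymm (hf (hST ha) hxT hx.1.le) (hfab ▸ hf hxT (hST hb) hx.2)
  have hslope : Tendsto (slope f a) (𝓝[>] a) (𝓝 (f' a)) :=
    (hasDerivAt_iff_tendsto_slope.mp (hd a ha).1).mono_left
      (nhdsWithin_mono _ fun x hx => ne_of_gt hx)
  refine tendsto_nhds_unique hslope (tendsto_const_nhds.congr' ?_)
  filter_upwards [Ioc_mem_nhdsGT hab] with x hx
  simp [slope_def_field, hconst x hx]

/-- Only the points where `f` has a nonzero derivative contribute, and `f` is injective there. -/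
theorem AntitoneOn.lintegral_neg_deriv_mul_comp_le {f : ℝ → ℝ} {s t : ℝ}
    (hf : AntitoneOn f (Icc s t)) (h : ℝ → ℝ≥0∞) :
    ∫⁻ x in Ioc s t, ENNReal.ofReal (-deriv f x) * h (f x) ≤ ∫⁻ y in Icc (f t) (f s), h y := by
  set S := Ioc s t ∩ {x | DifferentiableAt ℝ f x} ∩ deriv f ⁻¹' {0}ᶜ
  have hSm : MeasurableSet S :=
    (measurableSet_Ioc.inter (measurableSet_of_differentiableAt ℝ f)).inter
      (measurable_deriv f (measurableSet_singleton 0).compl)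
  have hderiv : ∀ x ∈ S, HasDerivAt f (deriv f x) x ∧ deriv f x ≠ 0 :=
    fun x hx => ⟨hx.1.2.hasDerivAt, hx.2⟩
  have hinj : InjOn f S := (hf.strictAntiOn_of_hasDerivAt_ne_zero ordConnected_Icc
    (fun x hx => Ioc_subset_Icc_self hx.1.1) hderiv).injOn
  have hzero : ∀ x ∈ Ioc s t, x ∉ S → ENNReal.ofReal (-deriv f x) * h (f x) = 0 := by
    intro x hx hxS
    by_cases hdx : DifferentiableAt ℝ f x
    · have : deriv f x = 0 := by simpa [S, hx, hdx] using hxS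
      simp [this]
    · simp [deriv_zero_of_not_differentiableAt hdx]
  have himage : f '' S ⊆ Icc (f t) (f s) := by
    rintro - ⟨x, hx, rfl⟩
    have hx' := hx.1.1
    exact ⟨hf ⟨hx'.1.le, hx'.2⟩ (right_mem_Icc.2 (hx'.1.le.trans hx'.2)) hx'.2,
      hf (left_mem_Icc.2 (hx'.1.le.trans hx'.2)) ⟨hx'.1.le, hx'.2⟩ hx'.1.le⟩
  calc ∫⁻ x in Ioc s t, ENNReal.ofReal (-deriv f x) * h (f x)
      = ∫⁻ x in Ioc s t, S.indicator (fun x => ENNReal.ofReal (-deriv f x) * h (f x)) x := by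
        refine setLIntegral_congr_fun measurableSet_Ioc fun x hx => ?_
        by_cases hxS : x ∈ S
        · simp [hxS]
        · simp [hxS, hzero x hx hxS]
    _ ≤ ∫⁻ x in S, ENNReal.ofReal (-deriv f x) * h (f x) :=
        (setLIntegral_le_lintegral _ _).trans_eq (lintegral_indicator hSm _)
    _ ≤ ∫⁻ x in S, ENNReal.ofReal |deriv f x| * h (f x) :=
        lintegral_mono fun x => mul_le_mul_left (ENNReal.ofReal_le_ofReal (neg_le_abs _)) _
    _ = ∫⁻ y in f '' S, h y := (lintegral_image_eq_lintegral_abs_deriv_mul hSm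
        (fun x hx => (hderiv x hx).1.hasDerivWithinAt) hinj h).symm
    _ ≤ ∫⁻ y in Icc (f t) (f s), h y := lintegral_mono_set himage

theorem AntitoneOn.ae_comp_notMem_of_deriv_neg {f : ℝ → ℝ} {s t : ℝ}
    (hf : AntitoneOn f (Icc s t)) {N : Set ℝ} (hN : volume N = 0) :
    ∀ᵐ x ∂volume.restrict (Ioc s t), deriv f x < 0 → f x ∉ N := by
  set N' := toMeasurable volume N
  set F : ℝ → ℝ≥0∞ := fun x => ENNReal.ofReal (-deriv f x) * N'.indicator 1 (f x)
  have hF : AEMeasurable F (volume.restrict (Ioc s t)) :=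
    (measurable_deriv f).neg.ennreal_ofReal.aemeasurable.mul
      ((measurable_one.indicator (measurableSet_toMeasurable _ _)).comp_aemeasurable
        (aemeasurable_restrict_of_antitoneOn measurableSet_Ioc (hf.mono Ioc_subset_Icc_self)))
  have hF0 : ∫⁻ x in Ioc s t, F x = 0 := by
    refine le_antisymm ((hf.lintegral_neg_deriv_mul_comp_le _).trans ?_) zero_le
    rw [lintegral_indicator_one (measurableSet_toMeasurable _ _)]
    exact (Measure.restrict_apply_le _ _).trans_eq (by rw [measure_toMeasurable, hN])
  filter_upwards [(lintegral_eq_zero_iff' hF).1 hF0] with x hx hneg hxN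
  have : N'.indicator (1 : ℝ → ℝ≥0∞) (f x) = 1 :=
    indicator_of_mem (subset_toMeasurable _ _ hxN) _
  simp only [F, this, mul_one, Pi.zero_apply, ENNReal.ofReal_eq_zero, neg_nonpos] at hx
  exact hx.not_gt hneg

theorem ae_nonneg_of_monotone_of_integral_eq_sub {θ θd : ℝ → ℝ} (hθ : Monotone θ)
    (hθd : LocallyIntegrable θd) (hθftc : ∀ x y : ℝ, θ y - θ x = ∫ r in x..y, θd r) :
    ∀ᵐ s, 0 ≤ θd s := by
  filter_upwards [IsUnifLocDoublingMeasure.ae_tendsto_average (volume : Measure ℝ) hθd 1]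
    with x hx
  have hr : ∀ᶠ r in 𝓝[>] (0 : ℝ), 0 < r := self_mem_nhdsWithin
  refine ge_of_tendsto (hx (fun _ => x) id tendsto_id ?_) ?_
  · filter_upwards [hr] with r hr using mem_closedBall_self (by simpa using hr.le)
  · filter_upwards [hr] with r hr
    rw [setAverage_eq, Real.closedBall_eq_Icc, integral_Icc_eq_integral_Ioc,
      ← intervalIntegral.integral_of_le (by simp; linarith), ← hθftc]
    exact smul_nonneg (by positivity) (sub_nonneg.2 (hθ (by simp; linarith)))

/-- Young's inequality `G m ≤ G^{p'}/p' + m^p/p` turns the dissipation inequality into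
`G m ≤ -D`. -/
theorem ofReal_le_ofReal_neg_mul_of_dissipation {p : ℝ} (hp : 1 < p) {G a : ℝ≥0∞} {m D : ℝ}
    (hm : 0 ≤ m)
    (hdiss : G ^ (p / (p - 1)) / ENNReal.ofReal (p / (p - 1)) + ENNReal.ofReal (m ^ p / p) ≤
      ENNReal.ofReal (-D))
    (hKL : 0 < -D → 1 ≤ a * G) :
    ENNReal.ofReal m ≤ ENNReal.ofReal (-D) * a := by
  have hp0 : 0 < p := by linarith
  rcases lt_or_ge 0 (-D) with hD | hD
  · have hpq : (p / (p - 1)).HolderConjugate p := by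
      simpa [Real.conjExponent] using (Real.HolderConjugate.conjExponent hp).symm
    have hyoung : G * ENNReal.ofReal m ≤ ENNReal.ofReal (-D) := by
      refine le_trans ?_ hdiss
      have h := ENNReal.young_inequality G (ENNReal.ofReal m) hpq
      rwa [ENNReal.ofReal_rpow_of_nonneg hm hp0.le, ← ENNReal.ofReal_div_of_pos hp0] at h
    calc ENNReal.ofReal m ≤ a * G * ENNReal.ofReal m := le_mul_of_one_le_left zero_le (hKL hD)
      _ = a * (G * ENNReal.ofReal m) := mul_assoc _ _ _
      _ ≤ a * ENNReal.ofReal (-D) := mul_le_mul_right hyoung _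
      _ = ENNReal.ofReal (-D) * a := mul_comm _ _
  · have hmp : ENNReal.ofReal (m ^ p / p) = 0 :=
      le_antisymm ((le_add_self.trans hdiss).trans_eq (ENNReal.ofReal_of_nonpos hD)) zero_le
    have hm0 : m = 0 := by
      by_contra hm0
      exact (ENNReal.ofReal_eq_zero.1 hmp).not_gt
        (div_pos (Real.rpow_pos_of_pos (hm.lt_of_ne' hm0) p) hp0)
    simp [hm0]

theorem setLIntegral_Icc_ofReal_eq_sub {θ θd : ℝ → ℝ}
    (hθint : ∀ c d : ℝ, IntegrableOn θd (Icc c d)) (hθd0 : ∀ᵐ s, 0 ≤ θd s)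
    (hθftc : ∀ x y : ℝ, θ y - θ x = ∫ r in x..y, θd r) {x y : ℝ} (hxy : x ≤ y) :
    ∫⁻ u in Icc x y, ENNReal.ofReal (θd u) = ENNReal.ofReal (θ y - θ x) := by
  rw [← ofReal_integral_eq_lintegral_ofReal (hθint x y) (ae_restrict_of_ae hθd0),
    integral_Icc_eq_integral_Ioc, ← intervalIntegral.integral_of_le hxy, hθftc]

theorem locallyIntegrable_of_forall_integrableOn_Icc {f : ℝ → ℝ}
    (hf : ∀ c d : ℝ, IntegrableOn f (Icc c d)) : LocallyIntegrable f :=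
  fun x => ⟨Icc (x - 1) (x + 1), Icc_mem_nhds (by linarith) (by linarith), hf _ _⟩

theorem lintegral_ofReal_le_sub_of_KL {e md θ θd : ℝ → ℝ} {G : ℝ → ℝ≥0∞} {p c s t : ℝ}
    (hp : 1 < p) (hst : s ≤ t) (he : AntitoneOn e (Icc s t)) (hce : ∀ r ∈ Ioc s t, c ≤ e r)
    (hmd : ∀ r ∈ Ioc s t, 0 ≤ md r)
    (hdiss : ∀ᵐ r ∂volume.restrict (Ioc s t), ∃ D : ℝ, HasDerivAt e D r ∧
      G r ^ (p / (p - 1)) / ENNReal.ofReal (p / (p - 1)) + ENNReal.ofReal (md r ^ p / p) ≤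
        ENNReal.ofReal (-D))
    (hθmono : StrictMono θ) (hθ0 : θ 0 = 0)
    (hθint : ∀ c d : ℝ, IntegrableOn θd (Icc c d))
    (hθftc : ∀ x y : ℝ, θ y - θ x = ∫ r in x..y, θd r)
    (hθnull : volume {s : ℝ | 0 < θ s ∧ θd s = 0} = 0)
    (hKL : ∀ r ∈ Ioo s t, c < e r → 0 < θd (e r - c) →
      1 ≤ ENNReal.ofReal (θd (e r - c)) * G r) :
    ∫⁻ r in Ioc s t, ENNReal.ofReal (md r) ≤ ENNReal.ofReal (θ (e s - c) - θ (e t - c)) := by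
  have hθd0 := ae_nonneg_of_monotone_of_integral_eq_sub hθmono.monotone
    (locallyIntegrable_of_forall_integrableOn_Icc hθint) hθftc
  -- `0 ∈ N` forces `c < e r` at almost every time where `e` strictly decreases.
  set N : Set ℝ := {0} ∪ {s | 0 < θ s ∧ θd s = 0} ∪ {s | θd s < 0}
  have hN : volume N = 0 := measure_union_null (measure_union_null (measure_singleton 0) hθnull)
    (by simpa only [not_le] using ae_iff.1 hθd0)
  have hf : AntitoneOn (fun r => e r - c) (Icc s t) :=
    fun a ha b hb hab => sub_le_sub_right (he ha hb hab) c
  have hpointwise : ∀ᵐ r ∂volume.restrict (Ioc s t), ENNReal.ofReal (md r) ≤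
      ENNReal.ofReal (-deriv (fun r => e r - c) r) * ENNReal.ofReal (θd (e r - c)) := by
    filter_upwards [hdiss, hf.ae_comp_notMem_of_deriv_neg hN, ae_restrict_mem measurableSet_Ioc,
      ae_restrict_of_ae (Measure.ae_ne volume t)] with r ⟨D, hD, hineq⟩ hsard hr hrt
    rw [deriv_sub_const, hD.deriv]
    refine ofReal_le_ofReal_neg_mul_of_dissipation hp (hmd r hr) hineq fun hDneg => ?_
    have hrN : e r - c ∉ N := hsard (by simpa [hD.deriv] using hDneg)
    simp only [N, mem_union, mem_singleton_iff, mem_ofPred_eq, not_or, not_and, not_lt] at hrN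
    have hpos : 0 < e r - c := (sub_nonneg.2 (hce r hr)).lt_of_ne' hrN.1.1
    have hθpos : 0 < θ (e r - c) := hθ0 ▸ hθmono hpos
    exact hKL r ⟨hr.1, hr.2.lt_of_ne hrt⟩ (sub_pos.1 hpos) (hrN.2.lt_of_ne' (hrN.1.2 hθpos))
  calc ∫⁻ r in Ioc s t, ENNReal.ofReal (md r)
      ≤ ∫⁻ r in Ioc s t, ENNReal.ofReal (-deriv (fun r => e r - c) r) *
          ENNReal.ofReal (θd (e r - c)) := lintegral_mono_ae hpointwise
    _ ≤ ∫⁻ σ in Icc (e t - c) (e s - c), ENNReal.ofReal (θd σ) :=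
        hf.lintegral_neg_deriv_mul_comp_le fun σ => ENNReal.ofReal (θd σ)
    _ = ENNReal.ofReal (θ (e s - c) - θ (e t - c)) :=
        setLIntegral_Icc_ofReal_eq_sub hθint hθd0 hθftc
          (sub_le_sub_right (he ⟨le_rfl, hst⟩ ⟨hst, le_rfl⟩ hst) c)

theorem continuousOn_of_dist_le_intervalIntegral {X : Type*} [PseudoMetricSpace X]
    {v : ℝ → X} {md : ℝ → ℝ} {a : ℝ}
    (hint : ∀ c d : ℝ, a < c → c ≤ d → IntegrableOn md (Ioc c d))
    (hdist : ∀ s t : ℝ, a < s → s ≤ t → dist (v s) (v t) ≤ ∫ r in s..t, md r) :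
    ContinuousOn v (Ioi a) := by
  intro t (ht : a < t)
  obtain ⟨c, hc, hct⟩ := exists_between ht
  have hprim : ContinuousAt (fun x => ∫ r in t..x, md r) t := by
    have hmd : IntervalIntegrable md volume c (t + 1) :=
      (intervalIntegrable_iff_integrableOn_Ioc_of_le (by linarith)).2 (hint c _ hc (by linarith))
    have hI : uIcc c (t + 1) = Icc c (t + 1) := uIcc_of_le (by linarith)
    have htI : t ∈ uIcc c (t + 1) := hI ▸ ⟨hct.le, by linarith⟩
    exact (intervalIntegral.continuousOn_primitive_interval' hmd htI t htI).continuousAt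
      (hI ▸ Icc_mem_nhds hct (by linarith))
  have hbound : ∀ᶠ x in 𝓝 t, dist (v x) (v t) ≤ |∫ r in t..x, md r| := by
    filter_upwards [Ioi_mem_nhds hct] with x (hx : c < x)
    rcases le_total t x with htx | hxt
    · rw [dist_comm]; exact (hdist t x ht htx).trans (le_abs_self _)
    · rw [intervalIntegral.integral_symm, abs_neg]
      exact (hdist x t (hc.trans hx) hxt).trans (le_abs_self _)
  refine ContinuousAt.continuousWithinAt (tendsto_iff_dist_tendsto_zero.2 ?_)
  refine squeeze_zero' (Eventually.of_forall fun _ => dist_nonneg) hbound ?_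
  simpa using hprim.abs.tendsto

theorem AntitoneOn.exists_tendsto_atTop_s12 {f : ℝ → ℝ} {a : ℝ} (hf : AntitoneOn f (Ioi a))
    (hbdd : BddBelow (f '' Ioi a)) :
    ∃ L, Tendsto f atTop (𝓝 L) ∧ ∀ t > a, L ≤ f t := by
  have hanti : Antitone fun t => f (max t (a + 1)) := fun x y hxy =>
    hf (lt_max_of_lt_right (lt_add_one a)) (lt_max_of_lt_right (lt_add_one a))
      (max_le_max_right _ hxy)
  have hlim : Tendsto f atTop (𝓝 (⨅ t, f (max t (a + 1)))) := by
    refine (tendsto_atTop_ciInf hanti ?_).congr' ?_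
    · obtain ⟨b, hb⟩ := hbdd
      exact ⟨b, by rintro - ⟨t, rfl⟩; exact hb ⟨_, lt_max_of_lt_right (lt_add_one a), rfl⟩⟩
    · filter_upwards [eventually_ge_atTop (a + 1)] with t ht
      rw [max_eq_left ht]
  refine ⟨_, hlim, fun t ht => le_of_tendsto hlim ?_⟩
  filter_upwards [eventually_ge_atTop t] with s hs
  exact hf ht (ht.trans_le hs) hs

theorem forall_mem_ball_of_dist_le_sub {X : Type*} [PseudoMetricSpace X]
    {v : ℝ → X} {Θ : ℝ → ℝ} {φ : X} {ε ts L : ℝ}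
    (hv : ContinuousOn v (Ici ts)) (hL : ∀ t ≥ ts, L ≤ Θ t)
    (hstart : dist (v ts) φ + (Θ ts - L) < ε)
    (hdist : ∀ t ≥ ts, (∀ r ∈ Ioo ts t, v r ∈ ball φ ε) → dist (v ts) (v t) ≤ Θ ts - Θ t) :
    ∀ t ≥ ts, v t ∈ ball φ ε := by
  by_contra! hexit
  set F := Ici ts ∩ (fun t => dist (v t) φ) ⁻¹' Ici ε
  have hF : IsClosed F := ((continuous_id.dist continuous_const).comp_continuousOn
    hv).preimage_isClosed_of_isClosed isClosed_Ici isClosed_Ici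
  have hFne : F.Nonempty := by
    obtain ⟨t, ht, hout⟩ := hexit
    exact ⟨t, ht, not_lt.1 (mem_ball.not.1 hout)⟩
  have hFbdd : BddBelow F := ⟨ts, fun _ h => h.1⟩
  set T := sInf F
  have hT : T ∈ F := hF.csInf_mem hFne hFbdd
  have hbefore : ∀ r ∈ Ioo ts T, v r ∈ ball φ ε := fun r hr =>
    mem_ball.2 <| not_le.1 fun hout => hr.2.not_ge (csInf_le hFbdd ⟨hr.1.le, hout⟩)
  have hd := hdist T hT.1 hbefore
  have hΘT := hL T hT.1
  have : dist (v T) φ < ε := calc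
    dist (v T) φ ≤ dist (v ts) (v T) + dist (v ts) φ := dist_triangle_left _ _ _
    _ < ε := by linarith
  exact this.not_ge hT.2

theorem exists_forall_mem_ball_and_tendsto {X : Type*} [PseudoMetricSpace X]
    {v : ℝ → X} {Θ : ℝ → ℝ} {φ : X} {ε : ℝ} {tn : ℕ → ℝ}
    (hv : ContinuousOn v (Ioi 0)) (hΘ : AntitoneOn Θ (Ioi 0)) (hΘ0 : ∀ t > 0, 0 ≤ Θ t)
    (htn : Tendsto tn atTop atTop) (hvtn : Tendsto (v ∘ tn) atTop (𝓝 φ)) (hε : 0 < ε)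
    (hdist : ∀ s t : ℝ, 0 < s → s ≤ t → (∀ r ∈ Ioo s t, v r ∈ ball φ ε) →
      dist (v s) (v t) ≤ Θ s - Θ t) :
    ∃ ts, (∀ t ≥ ts, v t ∈ ball φ ε) ∧ Tendsto v atTop (𝓝 φ) := by
  obtain ⟨L, hΘL, hLΘ⟩ := hΘ.exists_tendsto_atTop_s12 ⟨0, by rintro - ⟨t, ht, rfl⟩; exact hΘ0 t ht⟩
  have hsmall : Tendsto (fun n => dist (v (tn n)) φ + (Θ (tn n) - L)) atTop (𝓝 0) := by
    simpa using (tendsto_iff_dist_tendsto_zero.1 hvtn).add ((hΘL.comp htn).sub_const L)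
  obtain ⟨n, hpos, hclose⟩ :=
    ((htn.eventually_gt_atTop 0).and (hsmall.eventually_lt_const hε)).exists
  have hball := forall_mem_ball_of_dist_le_sub (hv.mono fun t ht => hpos.trans_le ht)
    (fun t ht => hLΘ t (hpos.trans_le ht)) hclose (fun t ht => hdist _ t hpos ht)
  refine ⟨tn n, hball, tendsto_iff_dist_tendsto_zero.2 ?_⟩
  have hbound : ∀ t ≥ tn n, dist (v t) φ ≤ Θ t - L := by
    intro t ht
    have hlim : Tendsto (fun m => Θ t - Θ (tn m) + dist (v (tn m)) φ) atTop (𝓝 (Θ t - L)) := by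
      simpa using (tendsto_const_nhds.sub (hΘL.comp htn)).add
        (tendsto_iff_dist_tendsto_zero.1 hvtn)
    refine ge_of_tendsto hlim ?_
    filter_upwards [htn.eventually_ge_atTop t] with m hm
    have := hdist t (tn m) (hpos.trans_le ht) hm fun r hr => hball r (ht.trans hr.1.le)
    linarith [dist_triangle (v t) (v (tn m)) φ]
  refine squeeze_zero' (Eventually.of_forall fun _ => dist_nonneg)
    ((eventually_ge_atTop (tn n)).mono hbound) ?_
  simpa using hΘL.sub_const L

theorem le_of_lowerSemicontinuousOn_closure_image {X α : Type*} [TopologicalSpace X]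
    [LinearOrder α] {E : X → α} {v : ℝ → X} {tb a : ℝ} {φ : X} {tn : ℕ → ℝ}
    (hlsc : LowerSemicontinuousOn E (closure (v '' Ici tb))) (htn : Tendsto tn atTop atTop)
    (hvtn : Tendsto (v ∘ tn) atTop (𝓝 φ)) (hanti : AntitoneOn (E ∘ v) (Ioi a)) :
    ∀ t > a, E φ ≤ E (v t) := by
  intro t ht
  by_contra! hlt
  have htraj : ∀ᶠ n in atTop, v (tn n) ∈ closure (v '' Ici tb) :=
    (htn.eventually_ge_atTop tb).mono fun n hn => subset_closure (mem_image_of_mem v hn)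
  have hφ : φ ∈ closure (v '' Ici tb) := isClosed_closure.mem_of_tendsto hvtn htraj
  have hwithin : Tendsto (v ∘ tn) atTop (𝓝[closure (v '' Ici tb)] φ) :=
    tendsto_nhdsWithin_iff.2 ⟨hvtn, htraj⟩
  obtain ⟨n, hn, htn⟩ :=
    ((hwithin.eventually (hlsc φ hφ _ hlt)).and (htn.eventually_ge_atTop t)).exists
  exact hn.not_ge (hanti ht (ht.trans_le htn) htn)

theorem setLIntegral_Ioi_lt_top_of_forall_Ioc_le {μ : Measure ℝ} {f : ℝ → ℝ≥0∞} {a T : ℝ}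
    {C : ℝ≥0∞} (haT : a ≤ T) (hfin : ∫⁻ x in Ioc a T, f x ∂μ < ⊤) (hC : C < ⊤)
    (h : ∀ t ≥ T, ∫⁻ x in Ioc T t, f x ∂μ ≤ C) : ∫⁻ x in Ioi a, f x ∂μ < ⊤ := by
  have htail : ∫⁻ x in Ioi T, f x ∂μ ≤ C := by
    rw [← iUnion_Ioc_eq_Ioi_self_iff.2 fun x _ => exists_nat_ge x,
      setLIntegral_iUnion_of_directed _
        (Monotone.directed_le fun m n hmn => Ioc_subset_Ioc_right (Nat.mono_cast hmn))]
    refine iSup_le fun n => ?_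
    rcases le_total (n : ℝ) T with hn | hn
    · simp [Ioc_eq_empty_of_le hn]
    · exact h n hn
  calc ∫⁻ x in Ioi a, f x ∂μ = ∫⁻ x in Ioc a T ∪ Ioi T, f x ∂μ := by
        rw [Ioc_union_Ioi_eq_Ioi haT]
    _ ≤ (∫⁻ x in Ioc a T, f x ∂μ) + ∫⁻ x in Ioi T, f x ∂μ := lintegral_union_le _ _ _
    _ < ⊤ := ENNReal.add_lt_top.2 ⟨hfin, htail.trans_lt hC⟩

theorem intervalIntegral_le_of_lintegral_le {f : ℝ → ℝ} {s t C : ℝ} (hst : s ≤ t)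
    (hf : IntegrableOn f (Ioc s t)) (hf0 : ∀ r ∈ Ioc s t, 0 ≤ f r) (hC : 0 ≤ C)
    (h : ∫⁻ r in Ioc s t, ENNReal.ofReal (f r) ≤ ENNReal.ofReal C) : ∫ r in s..t, f r ≤ C := by
  rwa [← ofReal_integral_eq_lintegral_ofReal hf
    ((ae_restrict_iff' measurableSet_Ioc).2 (ae_of_all _ hf0)),
    ENNReal.ofReal_le_ofReal_iff hC, ← intervalIntegral.integral_of_le hst] at h

theorem ITo_top : ITo ⊤ = Ioi 0 := by
  ext x
  simp [ITo, EReal.coe_lt_top]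

theorem IsPGradientFlow.toReal_le_toReal_of_lowerSemicontinuousOn {X : Type*}
    [PseudoMetricSpace X] {E : X → EReal} {g : X → ℝ≥0∞} {p : ℝ} {v : ℝ → X} {md : ℝ → ℝ}
    (hflow : IsPGradientFlow E g p ⊤ v md) {tb : ℝ} {φ : X} {tn : ℕ → ℝ}
    (hlsc : LowerSemicontinuousOn E (closure (v '' Ici tb))) (htn : Tendsto tn atTop atTop)
    (hvtn : Tendsto (v ∘ tn) atTop (𝓝 φ)) (hφ : E φ ≠ ⊥) :
    ∀ t > 0, (E φ).toReal ≤ (E (v t)).toReal := by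
  obtain ⟨-, -, -, -, hfin, hanti, -⟩ := hflow
  rw [ITo_top] at hfin hanti
  have hEanti : AntitoneOn (E ∘ v) (Ioi 0) := fun a ha b hb hab => by
    rw [Function.comp_apply, Function.comp_apply, ← EReal.coe_toReal (hfin a ha).1 (hfin a ha).2,
      ← EReal.coe_toReal (hfin b hb).1 (hfin b hb).2, EReal.coe_le_coe_iff]
    exact hanti ha hb hab
  exact fun t ht => EReal.toReal_le_toReal
    (le_of_lowerSemicontinuousOn_closure_image hlsc htn hvtn hEanti t ht) hφ (hfin t ht).1

theorem IsPGradientFlow.lintegral_Ioc_le_sub_of_KL {X : Type*} [PseudoMetricSpace X]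
    {E : X → EReal} {g : X → ℝ≥0∞} {p : ℝ} {v : ℝ → X} {md : ℝ → ℝ}
    (hflow : IsPGradientFlow E g p ⊤ v md) (hp : 1 < p) {φ : X} (hφ : E φ ≠ ⊥) (hφE : E φ ≠ ⊤)
    (hce : ∀ t > 0, (E φ).toReal ≤ (E (v t)).toReal) {ε : ℝ} {θ θd : ℝ → ℝ}
    (hθmono : StrictMono θ) (hθ0 : θ 0 = 0) (hθint : ∀ c d : ℝ, IntegrableOn θd (Icc c d))
    (hθftc : ∀ x y : ℝ, θ y - θ x = ∫ r in x..y, θd r)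
    (hθnull : volume {s : ℝ | 0 < θ s ∧ θd s = 0} = 0)
    (hKL : ∀ w ∈ Metric.ball φ ε, E φ < E w → E w ≠ ⊤ →
      0 < θd ((E w - E φ).toReal) →
      1 ≤ ENNReal.ofReal (θd ((E w - E φ).toReal)) * g w)
    (s t : ℝ) (hs : 0 < s) (hst : s ≤ t) (hball : ∀ r ∈ Ioo s t, v r ∈ ball φ ε) :
    ∫⁻ r in Ioc s t, ENNReal.ofReal (md r) ≤ ENNReal.ofReal
      (θ ((E (v s)).toReal - (E φ).toReal) - θ ((E (v t)).toReal - (E φ).toReal)) := by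
  obtain ⟨hmd0, -, -, -, hfin, hanti, hdiss⟩ := hflow
  rw [ITo_top] at hmd0 hfin hanti hdiss
  have hsub : Ioc s t ⊆ Ioi 0 := fun r hr => hs.trans hr.1
  refine lintegral_ofReal_le_sub_of_KL hp hst (hanti.mono fun r hr => hs.trans_le hr.1)
    (fun r hr => hce r (hsub hr)) (fun r hr => hmd0 r (hsub hr))
    ((ae_restrict_of_ae_restrict_of_subset hsub hdiss).mono fun r ⟨D, hD, _, h⟩ => ⟨D, hD, h⟩)
    hθmono hθ0 hθint hθftc hθnull fun r hr hcr hθd => ?_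
  have hr0 : 0 < r := hs.trans hr.1
  have hEr : (E (v r) - E φ).toReal = (E (v r)).toReal - (E φ).toReal :=
    EReal.toReal_sub (hfin r hr0).1 (hfin r hr0).2 hφE hφ
  have hlt : E φ < E (v r) := by
    rwa [← EReal.coe_toReal (hfin r hr0).1 (hfin r hr0).2, ← EReal.coe_toReal hφE hφ,
      EReal.coe_lt_coe_iff]
  simpa [hEr] using hKL (v r) (hball r hr) hlt (hfin r hr0).1 (by rwa [hEr])

theorem stmt12_general {X : Type*} [MetricSpace X]
    (E : X → EReal) (g : X → ℝ≥0∞)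
    (hbot : ∀ x, E x ≠ ⊥)
    (p : ℝ) (hp : 1 < p) (v : ℝ → X) (md : ℝ → ℝ)
    (hflow : IsPGradientFlow E g p ⊤ v md)
    (tb : ℝ)
    (hlsc : LowerSemicontinuousOn E (closure (v '' Ici tb)))
    (φ : X)
    (hφω : ∃ tn : ℕ → ℝ, Tendsto tn atTop atTop ∧
      Tendsto (fun n => v (tn n)) atTop (nhds φ))
    (hφE : E φ ≠ ⊤)
    (ε : ℝ) (hε : 0 < ε)
    (θ θd : ℝ → ℝ) (hθmono : StrictMono θ) (hθ0 : θ 0 = 0)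
    (hθint : ∀ c d : ℝ, IntegrableOn θd (Icc c d))
    (hθftc : ∀ x y : ℝ, θ y - θ x = ∫ r in x..y, θd r)
    (hθnull : volume {s : ℝ | 0 < θ s ∧ θd s = 0} = 0)
    (hKL : ∀ w ∈ Metric.ball φ ε, E φ < E w → E w ≠ ⊤ →
      0 < θd ((E w - E φ).toReal) →
      1 ≤ ENNReal.ofReal (θd ((E w - E φ).toReal)) * g w) :
    (∀ t₀ : ℝ, 0 < t₀ → (∫⁻ r in Ioi t₀, ENNReal.ofReal (md r)) < ⊤) ∧
      Tendsto v atTop (nhds φ) := by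
  obtain ⟨tn, htn, hvtn⟩ := hφω
  have hce := hflow.toReal_le_toReal_of_lowerSemicontinuousOn hlsc htn hvtn (hbot φ)
  have hlength := hflow.lintegral_Ioc_le_sub_of_KL hp (hbot φ) hφE hce hθmono hθ0 hθint hθftc
    hθnull hKL
  obtain ⟨hmd0, hint, hdist, -, -, hanti, -⟩ := hflow
  simp only [ITo_top, EReal.coe_lt_top, forall_const] at hmd0 hint hdist hanti
  set Θ : ℝ → ℝ := fun t => θ ((E (v t)).toReal - (E φ).toReal)
  have hΘanti : AntitoneOn Θ (Ioi 0) := fun a ha b hb hab =>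
    hθmono.monotone (sub_le_sub_right (hanti ha hb hab) _)
  have hΘ0 : ∀ t > 0, 0 ≤ Θ t := fun t ht => hθ0 ▸ hθmono.monotone (sub_nonneg.2 (hce t ht))
  obtain ⟨ts, hball, hlim⟩ := exists_forall_mem_ball_and_tendsto
    (continuousOn_of_dist_le_intervalIntegral hint hdist) hΘanti hΘ0 htn hvtn hε
    fun s t hs hst hin => (hdist s t hs hst).trans <| intervalIntegral_le_of_lintegral_le hst
      (hint s t hs hst) (fun r hr => hmd0 r (hs.trans hr.1))
      (sub_nonneg.2 (hΘanti hs (hs.trans_le hst) hst)) (hlength s t hs hst hin)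
  refine ⟨fun t₀ ht₀ => ?_, hlim⟩
  have hT : 0 < max t₀ ts := ht₀.trans_le (le_max_left _ _)
  refine setLIntegral_Ioi_lt_top_of_forall_Ioc_le (le_max_left t₀ ts)
    (hint _ _ ht₀ (le_max_left _ _)).lintegral_lt_top (ENNReal.ofReal_lt_top (r := Θ (max t₀ ts)))
    fun t ht => ?_
  exact (hlength _ t hT ht fun r hr => hball r ((le_max_right _ _).trans hr.1.le)).trans
    (ENNReal.ofReal_le_ofReal (sub_le_self _ (hΘ0 t (hT.trans_le ht))))

/-- Trend to equilibrium in the metric sense: if the ω-limit point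
`φ` of a `p`-gradient flow `v` is an equilibrium point, `E` is lsc on the closure of
the trajectory, the ball `B(φ,ε)` satisfies the Sard-type condition, and `E` satisfies
a Kurdyka–Łojasiewicz inequality on
`U_ε = B(φ,ε) ∩ [E(·|φ) > 0] ∩ [θ'(E(·|φ)) > 0]`, then `v` has finite length and
`v(t) → φ` as `t → ∞`. -/
theorem stmt12 {X : Type*} [MetricSpace X] [CompleteSpace X]
    (E : X → EReal) (g : X → ℝ≥0∞)
    (hproper : ∃ x, E x ≠ ⊤) (hbot : ∀ x, E x ≠ ⊥)
    (hsug : StrongUpperGradient E g)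
    (p : ℝ) (hp : 1 < p) (v : ℝ → X) (md : ℝ → ℝ)
    (hflow : IsPGradientFlow E g p ⊤ v md)
    (tb : ℝ) (htb : 0 ≤ tb)
    (hlsc : LowerSemicontinuousOn E (closure (v '' Ici tb)))
    (φ : X)
    (hφω : ∃ tn : ℕ → ℝ, Tendsto tn atTop atTop ∧
      Tendsto (fun n => v (tn n)) atTop (nhds φ))
    (hφ : g φ = 0) (hφE : E φ ≠ ⊤)
    (ε : ℝ) (hε : 0 < ε)
    (hsard : ∀ w ∈ Metric.ball φ ε, E φ < E w → 0 < g w)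
    (θ θd : ℝ → ℝ) (hθmono : StrictMono θ) (hθ0 : θ 0 = 0) (hθc : Continuous θ)
    (hθint : ∀ c d : ℝ, IntegrableOn θd (Icc c d))
    (hθftc : ∀ x y : ℝ, θ y - θ x = ∫ r in x..y, θd r)
    (hθnull : volume {s : ℝ | 0 < θ s ∧ θd s = 0} = 0)
    (hKL : ∀ w ∈ Metric.ball φ ε, E φ < E w → E w ≠ ⊤ →
      0 < θd ((E w - E φ).toReal) →
      1 ≤ ENNReal.ofReal (θd ((E w - E φ).toReal)) * g w) :
    (∀ t₀ : ℝ, 0 < t₀ → (∫⁻ r in Ioi t₀, ENNReal.ofReal (md r)) < ⊤) ∧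
      Tendsto v atTop (nhds φ) :=
  stmt12_general E g hbot p hp v md hflow tb hlsc φ hφω hφE ε hε θ θd hθmono hθ0 hθint hθftc hθnull
    hKL
end
end

section
/- Let X be a real Banach space, U ⊆ X open, E : U → ℝ twice continuously Fréchet differentiable, and let φ ∈ U be a local minimum of E such that E''(φ) : X → X' is invertible (with bounded inverse). Then there exist δ > 0 and C > 0 such that for all v in the ball B(φ,δ): (i) C⁻¹‖v−φ‖_X ≤ ‖E'(v)‖_{X'} ≤ C‖v−φ‖_X, (ii) (E(v) − E(φ))^{1/2} ≤ C‖v−φ‖_X, and (iii) the Łojasiewicz–Simon inequality with exponent 1/2: (E(v) − E(φ))^{1/2} ≤ C‖E'(v)‖_{X'} holds. -/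
/-!
Since `E'(φ) = 0` and `E''(φ)` is an isomorphism, the derivative of `E'` at `φ` makes
`E'(v)` comparable to `v - φ` in both directions. Feeding the upper bound into the mean value
inequality on the ball of radius `‖v - φ‖` gives `E v - E φ = O(‖v - φ‖²)`, and taking square
roots and then the lower bound yields the Łojasiewicz–Simon inequality with exponent `1/2`.
-/

open MeasureTheory Set Filter Topology Metric
open scoped ENNReal

noncomputable section

open Asymptotics

namespace HasFDerivAt

variable {𝕜 X F : Type*} [NontriviallyNormedField 𝕜] [NormedAddCommGroup X] [NormedSpace 𝕜 X]
  [NormedAddCommGroup F] [NormedSpace 𝕜 F] {f : X → F} {x₀ : X}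

theorem isTheta_sub_of_equiv {e : X ≃L[𝕜] F} (hf : HasFDerivAt f (e : X →L[𝕜] F) x₀) :
    (f · - f x₀) =Θ[𝓝 x₀] (· - x₀) := by
  have he : (· - x₀) =O[𝓝 x₀] (fun x => e (x - x₀)) := e.isBigO_sub_rev _ _
  have hrev := (hf.isLittleO.trans_isBigO he).right_isBigO_add
  exact ⟨hf.isBigO_sub, he.trans (hrev.congr_right fun x => sub_add_cancel _ _)⟩

end HasFDerivAt

section MeanValue

variable {X F : Type*} [NormedAddCommGroup X] [NormedSpace ℝ X] [NormedAddCommGroup F]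
  [NormedSpace ℝ F] {f : X → F} {x₀ : X}

theorem sub_isBigO_norm_sub_sq_of_fderiv_isBigO (hf : ∀ᶠ x in 𝓝 x₀, DifferentiableAt ℝ f x)
    (hf' : fderiv ℝ f =O[𝓝 x₀] (· - x₀)) :
    (f · - f x₀) =O[𝓝 x₀] (‖· - x₀‖ ^ 2) := by
  obtain ⟨c, hc, hbound⟩ := hf'.exists_nonneg
  obtain ⟨ε, hε, hball⟩ := Metric.eventually_nhds_iff_ball.1 (hf.and hbound.bound)
  refine IsBigO.of_bound c (eventually_of_mem (ball_mem_nhds x₀ hε) fun x hx => ?_)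
  have hsub : closedBall x₀ ‖x - x₀‖ ⊆ ball x₀ ε :=
    closedBall_subset_ball (by rwa [← dist_eq_norm, ← mem_ball])
  have hmvt := (convex_closedBall x₀ ‖x - x₀‖).norm_image_sub_le_of_norm_fderiv_le
    (fun y hy => (hball y (hsub hy)).1)
    (fun y hy => (hball y (hsub hy)).2.trans <|
      mul_le_mul_of_nonneg_left (by rwa [← dist_eq_norm, ← mem_closedBall]) hc)
    (mem_closedBall_self (norm_nonneg _)) (by rw [mem_closedBall, dist_eq_norm])
  simpa [sq, mul_assoc] using hmvt

theorem sqrt_sub_isBigO_sub_of_fderiv_isBigO {f : X → ℝ}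
    (hf : ∀ᶠ x in 𝓝 x₀, DifferentiableAt ℝ f x) (hf' : fderiv ℝ f =O[𝓝 x₀] (· - x₀)) :
    (fun x => √(f x - f x₀)) =O[𝓝 x₀] (· - x₀) := by
  have h := (sub_isBigO_norm_sub_sq_of_fderiv_isBigO hf hf').sqrt
    (Eventually.of_forall fun x => by positivity)
  simpa only [Real.sqrt_sq (norm_nonneg _), isBigO_norm_right] using h

end MeanValue

theorem stmt17_general {X : Type*} [NormedAddCommGroup X] [NormedSpace ℝ X]
    (U : Set X) (E : X → ℝ) (hE : ContDiffOn ℝ 2 E U)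
    (φ : X)
    (r₀ : ℝ) (hr₀ : 0 < r₀) (hball : Metric.ball φ r₀ ⊆ U)
    (hmin : ∀ w ∈ Metric.ball φ r₀, E φ ≤ E w)
    (hinv : ∃ e : X ≃L[ℝ] (X →L[ℝ] ℝ), ⇑e = ⇑(fderiv ℝ (fderiv ℝ E) φ)) :
    ∃ δ > (0:ℝ), ∃ C > (0:ℝ), Metric.ball φ δ ⊆ U ∧
      ∀ w ∈ Metric.ball φ δ,
        C⁻¹ * ‖w - φ‖ ≤ ‖fderiv ℝ E w‖ ∧
        ‖fderiv ℝ E w‖ ≤ C * ‖w - φ‖ ∧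
        Real.sqrt (E w - E φ) ≤ C * ‖w - φ‖ ∧
        Real.sqrt (E w - E φ) ≤ C * ‖fderiv ℝ E w‖ := by
  obtain ⟨e, he⟩ := hinv
  have hsmooth : ∀ᶠ w in 𝓝 φ, ContDiffAt ℝ 2 E w :=
    eventually_of_mem (ball_mem_nhds φ hr₀) fun w hw =>
      (hE.mono hball).contDiffAt (isOpen_ball.mem_nhds hw)
  have hcrit : fderiv ℝ E φ = 0 :=
    IsLocalMin.fderiv_eq_zero (eventually_of_mem (ball_mem_nhds φ hr₀) hmin)
  have hE'' : HasFDerivAt (fderiv ℝ E) (e : X →L[ℝ] (X →L[ℝ] ℝ)) φ := by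
    rw [show (e : X →L[ℝ] (X →L[ℝ] ℝ)) = fderiv ℝ (fderiv ℝ E) φ from DFunLike.coe_injective he]
    exact ((hsmooth.self_of_nhds.fderiv_right le_rfl).differentiableAt one_ne_zero).hasFDerivAt
  have hΘ : fderiv ℝ E =Θ[𝓝 φ] (· - φ) := by simpa [hcrit] using hE''.isTheta_sub_of_equiv
  have hsqrt : (fun w => √(E w - E φ)) =O[𝓝 φ] (· - φ) :=
    sqrt_sub_isBigO_sub_of_fderiv_isBigO (hsmooth.mono fun w hw => hw.differentiableAt two_ne_zero)
      hΘ.isBigO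
  -- each of the four bounds holds for all large constants, so one `C` serves them all
  obtain ⟨C, hC, hb₁, hb₂, hb₃, hb₄⟩ := ((eventually_gt_atTop 0).and <|
    (isBigO_iff_eventually.1 hΘ.isBigO_symm).and <| (isBigO_iff_eventually.1 hΘ.isBigO).and <|
    (isBigO_iff_eventually.1 hsqrt).and <|
      isBigO_iff_eventually.1 (hsqrt.trans hΘ.isBigO_symm)).exists
  obtain ⟨δ, hδ, hbounds⟩ := Metric.eventually_nhds_iff_ball.1
    ((eventually_of_mem (ball_mem_nhds φ hr₀) fun _ => id).and (hb₁.and (hb₂.and (hb₃.and hb₄))))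
  refine ⟨δ, hδ, C, hC, fun w hw => hball (hbounds w hw).1, fun w hw => ?_⟩
  obtain ⟨-, h₁, h₂, h₃, h₄⟩ := hbounds w hw
  exact ⟨(inv_mul_le_iff₀ hC).2 h₁, h₂, (Real.le_norm_self _).trans h₃,
    (Real.le_norm_self _).trans h₄⟩

/-- The smooth case: if `E` is `C²` on an open set `U` of a Banach
space, `φ ∈ U` is a local minimum and `E''(φ)` is invertible, then near `φ` the norm of
`E'(v)` is comparable to `‖v − φ‖` and the Łojasiewicz–Simon inequality with exponent
`1/2` holds: `(E v − E φ)^{1/2} ≤ C ‖E'(v)‖`. -/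
theorem stmt17 {X : Type*} [NormedAddCommGroup X] [NormedSpace ℝ X] [CompleteSpace X]
    (U : Set X) (hU : IsOpen U) (E : X → ℝ) (hE : ContDiffOn ℝ 2 E U)
    (φ : X) (hφU : φ ∈ U)
    (r₀ : ℝ) (hr₀ : 0 < r₀) (hball : Metric.ball φ r₀ ⊆ U)
    (hmin : ∀ w ∈ Metric.ball φ r₀, E φ ≤ E w)
    (hinv : ∃ e : X ≃L[ℝ] (X →L[ℝ] ℝ), ⇑e = ⇑(fderiv ℝ (fderiv ℝ E) φ)) :
    ∃ δ > (0:ℝ), ∃ C > (0:ℝ), Metric.ball φ δ ⊆ U ∧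
      ∀ w ∈ Metric.ball φ δ,
        C⁻¹ * ‖w - φ‖ ≤ ‖fderiv ℝ E w‖ ∧
        ‖fderiv ℝ E w‖ ≤ C * ‖w - φ‖ ∧
        Real.sqrt (E w - E φ) ≤ C * ‖w - φ‖ ∧
        Real.sqrt (E w - E φ) ≤ C * ‖fderiv ℝ E w‖ :=
  stmt17_general U E hE φ r₀ hr₀ hball hmin hinv
end
end
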